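/- arXiv:1705.09898 — 9 statements merged into one kernel-verified Lean document; each statement's English description precedes it below -/
import Mathlib

section
/- For strictly positive probability measures P and Q on a finite set X and α > 0, α ≠ 1, the density power divergence B_α(P,Q) = (α/(1-α)) Σ_x P(x)Q(x)^{α-1} − (1/(1-α)) Σ_x P(x)^α + Σ_x Q(x)^α is nonnegative, and equals 0 if and only if P = Q. -/
open Real Finset

lemma ptwise_pos {p q α : ℝ} (hp : 0 < p) (hq : 0 < q) (hα : 0 < α) (hα1 : α ≠ 1)
    (hne : p ≠ q) :
    0 < (p ^ α - q ^ α - α * q ^ (α - 1) * (p - q)) / (α - 1) := by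
  have hs : -1 < p / q - 1 := by
    have : 0 < p / q := div_pos hp hq
    linarith
  have hs0 : p / q - 1 ≠ 0 := by
    intro h
    apply hne
    have : p / q = 1 := by linarith
    field_simp at this
    linarith
  have hqα : (0:ℝ) < q ^ α := rpow_pos_of_pos hq α
  have hdiv : (1 + (p / q - 1)) ^ α = p ^ α / q ^ α := by
    rw [show 1 + (p / q - 1) = p / q by ring, div_rpow hp.le hq.le]
  have hq1 : q ^ (α - 1) * q = q ^ α := by
    calc q ^ (α - 1) * q = q ^ (α - 1) * q ^ (1:ℝ) := by rw [Real.rpow_one]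
      _ = q ^ (α - 1 + 1) := (Real.rpow_add hq _ _).symm
      _ = q ^ α := by ring_nf
  rcases lt_or_gt_of_ne (fun h => hα1 h) with h1 | h1
  · -- α < 1
    have key := rpow_one_add_lt_one_add_mul_self hs.le hs0 hα h1
    rw [hdiv] at key
    -- p^α/q^α < 1 + α*(p/q - 1)
    have key2 : p ^ α < q ^ α + α * q ^ (α - 1) * (p - q) := by
      have := (div_lt_iff₀ hqα).mp key
      calc p ^ α < (1 + α * (p / q - 1)) * q ^ α := this
        _ = q ^ α + α * (q ^ α / q) * (p - q) := by field_simp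
        _ = q ^ α + α * q ^ (α - 1) * (p - q) := by
            rw [show q ^ α / q = q ^ (α - 1) by
              rw [← hq1]; field_simp]
    apply div_pos_of_neg_of_neg <;> linarith
  · -- 1 < α
    have key := one_add_mul_self_lt_rpow_one_add hs.le hs0 h1
    rw [hdiv] at key
    have key2 : q ^ α + α * q ^ (α - 1) * (p - q) < p ^ α := by
      have := (lt_div_iff₀ hqα).mp key
      calc q ^ α + α * q ^ (α - 1) * (p - q)
          = q ^ α + α * (q ^ α / q) * (p - q) := by
            rw [show q ^ α / q = q ^ (α - 1) by rw [← hq1]; field_simp]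
        _ = (1 + α * (p / q - 1)) * q ^ α := by field_simp
        _ < p ^ α := this
    apply div_pos <;> linarith

lemma ptwise_identity {p q α : ℝ} (hq : 0 < q) (hα1 : α ≠ 1) :
    (p ^ α - q ^ α - α * q ^ (α - 1) * (p - q)) / (α - 1)
      = (α / (1 - α)) * (p * q ^ (α - 1)) - (1 / (1 - α)) * p ^ α + q ^ α := by
  have hq1 : q ^ (α - 1) * q = q ^ α := by
    calc q ^ (α - 1) * q = q ^ (α - 1) * q ^ (1:ℝ) := by rw [Real.rpow_one]
      _ = q ^ (α - 1 + 1) := (Real.rpow_add hq _ _).symm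
      _ = q ^ α := by ring_nf
  have h1 : α - 1 ≠ 0 := sub_ne_zero.mpr hα1
  have h2 : (1:ℝ) - α ≠ 0 := fun h => hα1 (by linarith)
  rw [← hq1]
  field_simp
  ring

/-- Nonnegativity of the density power divergence `B_α`, with equality
to zero iff `P = Q`, for strictly positive probability measures on a finite set. -/
theorem density_power_divergence_nonneg_and_eq_zero_iff
    {X : Type*} [Fintype X] [Nonempty X] (P Q : X → ℝ)
    (hP : ∀ x, 0 < P x) (hQ : ∀ x, 0 < Q x)
    (hPsum : ∑ x, P x = 1) (hQsum : ∑ x, Q x = 1)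
    (α : ℝ) (hα : 0 < α) (hα1 : α ≠ 1) :
    0 ≤ (α / (1 - α)) * ∑ x, P x * Q x ^ (α - 1)
        - (1 / (1 - α)) * ∑ x, P x ^ α + ∑ x, Q x ^ α ∧
      ((α / (1 - α)) * ∑ x, P x * Q x ^ (α - 1)
        - (1 / (1 - α)) * ∑ x, P x ^ α + ∑ x, Q x ^ α = 0 ↔ P = Q) := by
  set D : X → ℝ := fun x =>
    (P x ^ α - Q x ^ α - α * Q x ^ (α - 1) * (P x - Q x)) / (α - 1) with hD
  have hsum : (α / (1 - α)) * ∑ x, P x * Q x ^ (α - 1)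
        - (1 / (1 - α)) * ∑ x, P x ^ α + ∑ x, Q x ^ α = ∑ x, D x := by
    rw [Finset.mul_sum, Finset.mul_sum, ← Finset.sum_sub_distrib, ← Finset.sum_add_distrib]
    exact Finset.sum_congr rfl fun x _ => (ptwise_identity (hQ x) hα1).symm
  have hDnn : ∀ x ∈ Finset.univ, 0 ≤ D x := by
    intro x _
    by_cases h : P x = Q x
    · simp [hD, h]
    · exact (ptwise_pos (hP x) (hQ x) hα hα1 h).le
  rw [hsum]
  refine ⟨Finset.sum_nonneg hDnn, ?_⟩
  rw [Finset.sum_eq_zero_iff_of_nonneg hDnn]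
  constructor
  · intro h
    funext x
    by_contra hne
    exact absurd (h x (Finset.mem_univ x)) (ne_of_gt (ptwise_pos (hP x) (hQ x) hα hα1 hne))
  · intro h x _
    simp [hD, h]
end

section
/- Let P_θ be a member of the α-exponential family, i.e., P_θ(x) = Z(θ)^{-1}[Q(x)^{1-α} + (1-α)θᵀf(x)]^{1/(1-α)} with Z(θ) the normalizing constant. Then its α-scaled measure satisfies P_θ^{(α)}(x) = C · [(Q^{(α)}(x))^{(1/α)-1} + (1 − 1/α) θ'ᵀ f(x)]^{1/((1/α)-1)} for all x, where θ'_i = −α θ_i / ‖Q‖^{1-α}, ‖Q‖ = (Σ_x Q(x)^α)^{1/α}, and C is a positive constant (independent of x). In particular, P_θ^{(α)} belongs to the (1/α)-power-law family generated by Q^{(α)} and f with parameter θ'. -/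
open Real Finset

/-- The α-scaled (escort) measure associated with `P`. -/
noncomputable def escort {X : Type*} [Fintype X] (α : ℝ) (P : X → ℝ) : X → ℝ :=
  fun x => P x ^ α / ∑ y, P y ^ α

/-- If `P_θ` is a member of the α-exponential family generated by `Q` and `f`,
then its escort measure `P_θ^{(α)}` is, up to a positive constant, a member of the
`(1/α)`-power-law family generated by `Q^{(α)}` and `f`, with parameter
`θ'_i = -α θ_i / ‖Q‖^{1-α}` where `‖Q‖ = (Σ_x Q(x)^α)^{1/α}`. -/
theorem escort_of_alpha_exponential_family_mem_power_law_family
    {X : Type*} [Fintype X] [Nonempty X] {k : ℕ}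
    (α : ℝ) (hα : 0 < α) (hα1 : α ≠ 1)
    (Q : X → ℝ) (hQ : ∀ x, 0 < Q x) (hQsum : ∑ x, Q x = 1)
    (f : Fin k → X → ℝ) (θ : Fin k → ℝ)
    (hbr : ∀ x, 0 < Q x ^ (1 - α) + (1 - α) * ∑ i, θ i * f i x)
    (P : X → ℝ)
    (hP : ∀ x, P x =
      (∑ y, (Q y ^ (1 - α) + (1 - α) * ∑ i, θ i * f i y) ^ ((1 - α)⁻¹))⁻¹ *
        (Q x ^ (1 - α) + (1 - α) * ∑ i, θ i * f i x) ^ ((1 - α)⁻¹)) :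
    ∃ C : ℝ, 0 < C ∧ ∀ x,
      escort α P x =
        C * ((escort α Q x) ^ (1 / α - 1)
              + (1 - 1 / α) *
                  ∑ i, (-α * θ i / ((∑ y, Q y ^ α) ^ α⁻¹) ^ (1 - α)) * f i x)
            ^ (1 / (1 / α - 1)) := by
  have hα0 : α ≠ 0 := ne_of_gt hα
  have h1α : (1 : ℝ) - α ≠ 0 := sub_ne_zero.mpr (Ne.symm hα1)
  set B : X → ℝ := fun x => Q x ^ (1 - α) + (1 - α) * ∑ i, θ i * f i x with hBdef
  have hB : ∀ x, 0 < B x := hbr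
  set e : ℝ := α / (1 - α) with he
  have hS : 0 < ∑ y, Q y ^ α :=
    Finset.sum_pos (fun y _ => Real.rpow_pos_of_pos (hQ y) α) Finset.univ_nonempty
  set S := ∑ y, Q y ^ α with hSdef
  have hT : 0 < ∑ y, B y ^ e :=
    Finset.sum_pos (fun y _ => Real.rpow_pos_of_pos (hB y) e) Finset.univ_nonempty
  set T := ∑ y, B y ^ e with hTdef
  have hZ : 0 < ∑ y, B y ^ ((1 - α)⁻¹) :=
    Finset.sum_pos (fun y _ => Real.rpow_pos_of_pos (hB y) _) Finset.univ_nonempty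
  set Z := ∑ y, B y ^ ((1 - α)⁻¹) with hZdef
  set s : ℝ := (S ^ α⁻¹) ^ (1 - α) with hsdef
  have hs : 0 < s := Real.rpow_pos_of_pos (Real.rpow_pos_of_pos hS _) _
  refine ⟨S / T, div_pos hS hT, fun x => ?_⟩
  -- LHS computation
  have hPα : ∀ x, P x ^ α = (Z⁻¹) ^ α * B x ^ e := by
    intro x
    rw [hP x, Real.mul_rpow (inv_nonneg.mpr hZ.le) (Real.rpow_nonneg (hB x).le _),
      ← Real.rpow_mul (hB x).le]
    congr 1
    rw [he]; ring
  have hZne : (Z⁻¹ : ℝ) ^ α ≠ 0 :=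
    ne_of_gt (Real.rpow_pos_of_pos (inv_pos.mpr hZ) α)
  have hL : escort α P x = B x ^ e / T := by
    show P x ^ α / ∑ y, P y ^ α = B x ^ e / T
    simp only [hPα]
    rw [← Finset.mul_sum, mul_div_mul_left _ _ hZne, hTdef]
  rw [hL]
  -- bracket computation
  have h1 : (escort α Q x) ^ (1 / α - 1) = Q x ^ (1 - α) / s := by
    show ((Q x ^ α / ∑ y, Q y ^ α)) ^ (1 / α - 1) = _
    rw [← hSdef, Real.div_rpow (Real.rpow_nonneg (hQ x).le _) hS.le,
      ← Real.rpow_mul (hQ x).le]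
    have e1 : α * (1 / α - 1) = 1 - α := by field_simp
    have e2 : (1 : ℝ) / α - 1 = α⁻¹ * (1 - α) := by field_simp
    rw [e1, hsdef, ← Real.rpow_mul hS.le, ← e2]
  have h2 : (1 - 1 / α) * ∑ i, (-α * θ i / (S ^ α⁻¹) ^ (1 - α)) * f i x
      = (1 - α) * (∑ i, θ i * f i x) / s := by
    rw [← hsdef, Finset.mul_sum, eq_div_iff (ne_of_gt hs), Finset.sum_mul,
      Finset.mul_sum]
    refine Finset.sum_congr rfl fun i _ => ?_
    field_simp
    ring
  have hxne : (1:ℝ)/α - 1 ≠ 0 := by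
    have h' : (1:ℝ)/α - 1 = (1 - α)/α := by field_simp
    rw [h']; exact div_ne_zero h1α hα0
  have hexp : 1 / (1 / α - 1) = e := by
    rw [he, div_eq_div_iff hxne h1α]
    field_simp
  have hbr' : (escort α Q x) ^ (1 / α - 1)
      + (1 - 1 / α) * ∑ i, (-α * θ i / (S ^ α⁻¹) ^ (1 - α)) * f i x
      = s⁻¹ * B x := by
    rw [h1, h2, hBdef]
    field_simp
  rw [hbr', hexp, Real.mul_rpow (inv_nonneg.mpr hs.le) (hB x).le]
  have hc : s = S ^ (α⁻¹ * (1 - α)) := by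
    rw [hsdef, Real.rpow_mul hS.le]
  have hsi : (s⁻¹ : ℝ) ^ e = S⁻¹ := by
    rw [hc, ← Real.rpow_neg hS.le, ← Real.rpow_mul hS.le]
    have hx : -(α⁻¹ * (1 - α)) * e = -1 := by rw [he]; field_simp
    rw [hx, Real.rpow_neg_one]
  rw [hsi]
  field_simp
end

section
/- Let P_θ be a member of the non-normalized α-power-law family, P_θ(x) = [Q(x)^{α-1} + (1-α){Z(θ) + θᵀf(x)}]^{1/(α-1)}, where Z(θ) makes P_θ a probability measure. Then θ satisfies the density-power-divergence estimating equation Σ_x P̂(x) P_θ(x)^{α-1} s(x;θ) = Σ_x P_θ(x)^α s(x;θ), with s(x;θ) = ∇_θ log P_θ(x), if and only if Σ_x P_θ(x) f(x) = Σ_x P̂(x) f(x). -/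
open Real Finset

/-- For a member `P_θ` of the non-normalized α-power-law family,
`P_θ(x) = [Q(x)^{α-1} + (1-α){Z(θ) + θᵀf(x)}]^{1/(α-1)}`, θ satisfies the
density-power-divergence estimating equation
`Σ_x P̂(x) P_θ(x)^{α-1} s(x;θ) = Σ_x P_θ(x)^α s(x;θ)` iff
`Σ_x P_θ(x) f(x) = Σ_x P̂(x) f(x)`. -/
theorem nonnormalized_power_law_estimating_equation_iff_mean_matching
    {X : Type*} [Fintype X] [Nonempty X] {k : ℕ}
    (α : ℝ) (hα : 0 < α) (hα1 : α ≠ 1)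
    (Q : X → ℝ) (hQ : ∀ x, 0 < Q x) (hQsum : ∑ x, Q x = 1)
    (f : Fin k → X → ℝ)
    (Z : (Fin k → ℝ) → ℝ) (hZdiff : Differentiable ℝ Z)
    (P : (Fin k → ℝ) → X → ℝ)
    (hbr : ∀ t x, 0 < Q x ^ (α - 1) + (1 - α) * (Z t + ∑ i, t i * f i x))
    (hP : ∀ t x, P t x =
      (Q x ^ (α - 1) + (1 - α) * (Z t + ∑ i, t i * f i x)) ^ ((α - 1)⁻¹))
    (hnorm : ∀ t, ∑ x, P t x = 1)
    (Phat : X → ℝ) (hPhat : ∀ x, 0 ≤ Phat x) (hPhatsum : ∑ x, Phat x = 1)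
    (θ : Fin k → ℝ) :
    (∑ x, (Phat x * P θ x ^ (α - 1)) • fderiv ℝ (fun t => Real.log (P t x)) θ
        = ∑ x, (P θ x ^ α) • fderiv ℝ (fun t => Real.log (P t x)) θ) ↔
      ∀ i, ∑ x, P θ x * f i x = ∑ x, Phat x * f i x := by
  classical
  have hα1' : α - 1 ≠ 0 := sub_ne_zero.mpr hα1
  set g : X → (Fin k → ℝ) → ℝ :=
    fun x t => Q x ^ (α - 1) + (1 - α) * (Z t + ∑ i, t i * f i x) with hgdef
  set L : X → (Fin k → ℝ) →L[ℝ] ℝ :=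
    fun x => ∑ i, (f i x) • ContinuousLinearMap.proj i with hLdef
  have hLapp : ∀ x v, L x v = ∑ i, v i * f i x := by
    intro x v
    simp [hLdef, ContinuousLinearMap.sum_apply, mul_comm]
  have hgpos : ∀ x, 0 < g x θ := fun x => hbr θ x
  have hgderiv : ∀ x, HasFDerivAt (g x) ((1 - α) • (fderiv ℝ Z θ + L x)) θ := by
    intro x
    have h1 : HasFDerivAt (fun t : Fin k → ℝ => ∑ i, t i * f i x) (L x) θ := by
      have h := (L x).hasFDerivAt (x := θ)
      convert h using 1
      funext t
      rw [hLapp]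
    have h2 : HasFDerivAt Z (fderiv ℝ Z θ) θ := (hZdiff θ).hasFDerivAt
    have := ((h2.add h1).const_mul (1 - α)).const_add (Q x ^ (α - 1))
    simpa [smul_add, hgdef] using this
  have hfd : ∀ x, fderiv ℝ (fun t => Real.log (P t x)) θ
      = (-(g x θ)⁻¹) • (fderiv ℝ Z θ + L x) := by
    intro x
    have heq : (fun t => Real.log (P t x)) = fun t => (α - 1)⁻¹ * Real.log (g x t) := by
      funext t
      rw [hP t x, Real.log_rpow (hbr t x)]
    have hlog : HasFDerivAt (fun t => Real.log (g x t))
        ((g x θ)⁻¹ • ((1 - α) • (fderiv ℝ Z θ + L x))) θ :=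
      (hgderiv x).log (ne_of_gt (hgpos x))
    have hc := hlog.const_mul ((α - 1)⁻¹)
    rw [heq, hc.fderiv, smul_smul, smul_smul]
    congr 1
    have : (α - 1)⁻¹ * (g x θ)⁻¹ * (1 - α)
        = ((α - 1)⁻¹ * (α - 1)) * (-(g x θ)⁻¹) := by ring
    rw [this, inv_mul_cancel₀ hα1', one_mul]
  have hPpos : ∀ x, 0 < P θ x := by
    intro x; rw [hP]; exact Real.rpow_pos_of_pos (hbr θ x) _
  have hPα1 : ∀ x, P θ x ^ (α - 1) = g x θ := by
    intro x
    rw [hP, ← Real.rpow_mul (le_of_lt (hbr θ x)), inv_mul_cancel₀ hα1',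
      Real.rpow_one]
  have hPα : ∀ x, P θ x ^ α = P θ x * g x θ := by
    intro x
    have : P θ x ^ (α - 1 + 1) = P θ x ^ (α - 1) * P θ x ^ (1 : ℝ) :=
      Real.rpow_add (hPpos x) _ _
    rw [sub_add_cancel, Real.rpow_one, hPα1 x] at this
    rw [this, mul_comm]
  simp_rw [hfd, hPα1, hPα, smul_smul]
  have hc1 : ∀ x, Phat x * g x θ * -(g x θ)⁻¹ = -Phat x := by
    intro x
    rw [mul_neg, mul_assoc, mul_inv_cancel₀ (hgpos x).ne', mul_one]
  have hc2 : ∀ x, P θ x * g x θ * -(g x θ)⁻¹ = -P θ x := by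
    intro x
    rw [mul_neg, mul_assoc, mul_inv_cancel₀ (hgpos x).ne', mul_one]
  simp_rw [hc1, hc2, neg_smul (M := (Fin k → ℝ) →L[ℝ] ℝ), smul_add, Finset.sum_neg_distrib, neg_inj,
    Finset.sum_add_distrib, ← Finset.sum_smul, hPhatsum, hnorm θ, one_smul,
    add_right_inj]
  constructor
  · intro h i
    set e : Fin k → ℝ := Pi.single i 1 with he
    have h2 : (∑ x, Phat x • L x) e = (∑ x, P θ x • L x) e := by rw [h]
    simp only [ContinuousLinearMap.coe_sum', Finset.sum_apply,
      ContinuousLinearMap.coe_smul', Pi.smul_apply, hLapp, smul_eq_mul] at h2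
    have hs : ∀ x, (∑ j, e j * f j x) = f i x := by
      intro x
      rw [Finset.sum_eq_single i]
      · simp [he]
      · intro b _ hb; simp [he, Pi.single_eq_of_ne hb]
      · simp
    simp_rw [hs] at h2
    exact h2.symm
  · intro h
    ext v
    simp only [ContinuousLinearMap.coe_sum', Finset.sum_apply,
      ContinuousLinearMap.coe_smul', Pi.smul_apply, hLapp, smul_eq_mul]
    simp_rw [Finset.mul_sum]
    rw [Finset.sum_comm, Finset.sum_comm (γ := X)]
    refine Finset.sum_congr rfl fun i _ => ?_
    have : ∀ c : X → ℝ, ∑ x, c x * (v i * f i x) = v i * ∑ x, c x * f i x := by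
      intro c
      rw [Finset.mul_sum]
      exact Finset.sum_congr rfl fun x _ => by ring
    rw [this, this, h i]
end

section
/- Let B_α be the density power divergence on strictly positive probability measures on a finite set X, let α > 0, α ≠ 1, and let C be a closed convex subset of probability measures. If P* ∈ C attains min_{P∈C} B_α(P,Q) for a strictly positive Q, then B_α(P,Q) ≥ B_α(P,P*) + B_α(P*,Q) for every P ∈ C (Pythagorean inequality). -/
open Real Finset Filter Topology

/-- The density power divergence `B_α`, extended to probability measures that may
vanish, with the convention `B_α(P,Q) = ∞` when `α < 1` and `P` is not absolutely
continuous with respect to `Q`. -/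
noncomputable def Bdiv {X : Type*} [Fintype X] (α : ℝ) (P Q : X → ℝ) : EReal :=
  if α < 1 ∧ ∃ x, Q x = 0 ∧ P x ≠ 0 then ⊤
  else (((α / (1 - α)) * ∑ x, P x * Q x ^ (α - 1)
          - (1 / (1 - α)) * ∑ x, P x ^ α + ∑ x, Q x ^ α : ℝ) : EReal)

/-- Pythagorean inequality. If `P*` attains `min_{P ∈ C} B_α(P,Q)` over a
closed convex set `C` of probability measures, with `Q` of full support, then
`B_α(P,Q) ≥ B_α(P,P*) + B_α(P*,Q)` for every `P ∈ C`. -/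
theorem Bdiv_pythagorean_inequality
    {X : Type*} [Fintype X] [Nonempty X]
    (α : ℝ) (hα : 0 < α) (hα1 : α ≠ 1)
    (Q : X → ℝ) (hQ : ∀ x, 0 < Q x) (hQsum : ∑ x, Q x = 1)
    (C : Set (X → ℝ))
    (hprob : ∀ P ∈ C, (∀ x, 0 ≤ P x) ∧ ∑ x, P x = 1)
    (hclosed : IsClosed C) (hconvex : Convex ℝ C)
    (Pstar : X → ℝ) (hPstar : Pstar ∈ C)
    (hmin : ∀ P ∈ C, Bdiv α Pstar Q ≤ Bdiv α P Q) :
    ∀ P ∈ C, Bdiv α P Pstar + Bdiv α Pstar Q ≤ Bdiv α P Q := by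
  classical
  intro P hP
  have hα1' : (1:ℝ) - α ≠ 0 := fun h => hα1 (by linarith)
  obtain ⟨hPn, hPsum⟩ := hprob P hP
  obtain ⟨hPsn, hPssum⟩ := hprob Pstar hPstar
  set c : X → ℝ := fun x => P x - Pstar x with hc
  have hnotQ : ∀ R : X → ℝ, ¬(α < 1 ∧ ∃ x, Q x = 0 ∧ R x ≠ 0) := by
    rintro R ⟨-, x, hx, -⟩
    exact (hQ x).ne' hx
  -- segment membership
  have hmem : ∀ t ∈ Set.Icc (0:ℝ) 1, (fun x => Pstar x + t * c x) ∈ C := by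
    intro t ht
    have h := hconvex hPstar hP (by linarith [ht.2] : (0:ℝ) ≤ 1 - t) ht.1 (by ring)
    convert h using 1
    funext x
    simp only [Pi.add_apply, Pi.smul_apply, smul_eq_mul, hc]
    ring
  -- minimality in real terms
  have hgmin : ∀ t ∈ Set.Icc (0:ℝ) 1,
      (α/(1-α)) * ∑ x, Pstar x * Q x ^ (α-1) - (1/(1-α)) * ∑ x, Pstar x ^ α + ∑ x, Q x ^ α
      ≤ (α/(1-α)) * ∑ x, (Pstar x + t * c x) * Q x ^ (α-1)
        - (1/(1-α)) * ∑ x, (Pstar x + t * c x) ^ α + ∑ x, Q x ^ α := by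
    intro t ht
    have h := hmin _ (hmem t ht)
    rw [Bdiv, Bdiv, if_neg (hnotQ _), if_neg (hnotQ _)] at h
    exact_mod_cast h
  -- sum identity for the linear part
  have hsum1 : ∀ t : ℝ, ∑ x, (Pstar x + t * c x) * Q x ^ (α-1)
      = (∑ x, Pstar x * Q x ^ (α-1)) + t * ∑ x, c x * Q x ^ (α-1) := by
    intro t
    rw [Finset.mul_sum, ← Finset.sum_add_distrib]
    exact Finset.sum_congr rfl fun x _ => by ring
  -- the infinite case cannot happen
  have hnotbad : ¬(α < 1 ∧ ∃ x, Pstar x = 0 ∧ P x ≠ 0) := by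
    rintro ⟨hαlt, x0, hx0, hPx0⟩
    have hPx0pos : 0 < P x0 := lt_of_le_of_ne (hPn x0) (Ne.symm hPx0)
    set s : ℝ := P x0 ^ α with hs
    have hspos : 0 < s := Real.rpow_pos_of_pos hPx0pos α
    set A : ℝ := ∑ x, c x * Q x ^ (α-1) with hA
    set T2 : ℝ := ∑ x, Pstar x ^ α with hT2
    set K : ℝ := α * A + T2 with hK
    have hβ : 0 < 1/(1-α) := by
      apply div_pos one_pos; linarith
    have hT2e : T2 = ∑ x ∈ univ.erase x0, Pstar x ^ α := by
      rw [hT2, ← Finset.add_sum_erase _ _ (mem_univ x0), hx0,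
        Real.zero_rpow hα.ne', zero_add]
    have key : ∀ t ∈ Set.Ioc (0:ℝ) (1/2), s ≤ t ^ ((1:ℝ)-α) * K := by
      intro t ht
      obtain ⟨ht0, ht1⟩ := ht
      have ht1' : t ≤ 1 := by linarith
      have h1t : (0:ℝ) < 1 - t := by linarith
      -- lower bound on ∑ (Pstar + t c)^α
      have hΔ : (1-t) * T2 + t ^ α * s ≤ ∑ x, (Pstar x + t * c x) ^ α := by
        rw [← Finset.add_sum_erase _ (fun x => (Pstar x + t * c x) ^ α) (mem_univ x0)]
        have hx0v : (Pstar x0 + t * c x0) ^ α = t ^ α * s := by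
          simp only [hc, hx0, sub_zero, zero_add, hs]
          rw [Real.mul_rpow ht0.le (hPn x0)]
        rw [hx0v, hT2e, add_comm ((1-t) * _)]
        refine add_le_add le_rfl ?_
        rw [Finset.mul_sum]
        refine Finset.sum_le_sum fun x _ => ?_
        have hmono : ((1-t) * Pstar x) ^ α ≤ (Pstar x + t * c x) ^ α := by
          refine Real.rpow_le_rpow (mul_nonneg h1t.le (hPsn x)) ?_ hα.le
          simp only [hc]
          nlinarith [hPn x]
        calc (1-t) * Pstar x ^ α ≤ (1-t)^α * Pstar x ^ α := by
              have h2 : (1-t) ^ (1:ℝ) ≤ (1-t) ^ α :=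
                Real.rpow_le_rpow_of_exponent_ge h1t (by linarith) hαlt.le
              rw [Real.rpow_one] at h2
              exact mul_le_mul_of_nonneg_right h2 (Real.rpow_nonneg (hPsn x) α)
          _ = ((1-t) * Pstar x) ^ α := (Real.mul_rpow h1t.le (hPsn x)).symm
          _ ≤ _ := hmono
      -- use minimality
      have h := hgmin t ⟨ht0.le, ht1'⟩
      rw [hsum1 t] at h
      set W : ℝ := ∑ x, (Pstar x + t * c x) ^ α with hW
      have h2 : (1/(1-α)) * W ≤ (1/(1-α)) * (T2 + α * (t * A)) := by
        ring_nf at h ⊢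
        linarith
      have h3 : W ≤ T2 + α * (t * A) := (mul_le_mul_iff_right₀ hβ).mp h2
      have h4 : t ^ α * s ≤ t * K := by
        rw [hK]
        nlinarith [hΔ, h3]
      have htt : t ^ α * t ^ ((1:ℝ)-α) = t := by
        rw [← Real.rpow_add ht0]
        norm_num
      have h5 : t ^ α * s ≤ t ^ α * (t ^ ((1:ℝ)-α) * K) := by
        rw [← mul_assoc, htt]; exact h4
      exact (mul_le_mul_iff_right₀ (Real.rpow_pos_of_pos ht0 α)).mp h5
    -- limit of the RHS is 0
    have hlim : Tendsto (fun t : ℝ => t ^ ((1:ℝ)-α) * K) (𝓝[>] (0:ℝ)) (𝓝 0) := by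
      have h1 : Tendsto (fun t : ℝ => t ^ ((1:ℝ)-α)) (𝓝 (0:ℝ)) (𝓝 ((0:ℝ) ^ ((1:ℝ)-α))) :=
        (Real.continuousAt_rpow_const 0 ((1:ℝ)-α) (Or.inr (by linarith))).tendsto
      rw [Real.zero_rpow (by linarith : (1:ℝ) - α ≠ 0)] at h1
      have h2 : Tendsto (fun t : ℝ => t ^ ((1:ℝ)-α)) (𝓝[>] (0:ℝ)) (𝓝 0) :=
        h1.mono_left nhdsWithin_le_nhds
      have := h2.mul_const K
      simpa using this
    have hfin : s ≤ 0 := by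
      refine ge_of_tendsto hlim ?_
      filter_upwards [Ioc_mem_nhdsGT_of_mem
        (Set.mem_Ico.mpr ⟨le_refl (0:ℝ), one_half_pos⟩)] with t ht
      exact key t ht
    linarith
  -- now everything is finite; reduce to a real inequality
  rw [Bdiv, Bdiv, Bdiv, if_neg hnotbad, if_neg (hnotQ _), if_neg (hnotQ _),
    ← EReal.coe_add, EReal.coe_le_coe_iff]
  -- per-point identity
  have hIdx : ∀ x, Pstar x * Pstar x ^ (α-1) = Pstar x ^ α := by
    intro x
    rcases eq_or_lt_of_le (hPsn x) with h | h
    · rw [← h]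
      simp [Real.zero_rpow hα.ne']
    · have hadd := Real.rpow_add h 1 (α-1)
      rw [Real.rpow_one] at hadd
      rw [← hadd]
      norm_num
  -- derivative of the linear part
  have hD1 : HasDerivAt (fun t : ℝ => ∑ x, (Pstar x + t * c x) * Q x ^ (α-1))
      (∑ x, c x * Q x ^ (α-1)) 0 :=
    HasDerivAt.fun_sum fun x _ => by
      simpa using ((hasDerivAt_mul_const (c x)).const_add (Pstar x)).mul_const (Q x ^ (α-1))
  -- derivative of the power part
  have hD2 : HasDerivAt (fun t : ℝ => ∑ x, (Pstar x + t * c x) ^ α)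
      (∑ x, α * Pstar x ^ (α-1) * c x) 0 := by
    refine HasDerivAt.fun_sum fun x _ => ?_
    by_cases hcase : Pstar x ≠ 0 ∨ 1 ≤ α
    · have h0 : HasDerivAt (fun t : ℝ => Pstar x + t * c x) (c x) 0 :=
        (hasDerivAt_mul_const (c x)).const_add (Pstar x)
      have h1 := h0.rpow_const (p := α) (by simpa using hcase)
      exact h1.congr_deriv (by rw [zero_mul, add_zero]; ring)
    · push_neg at hcase
      obtain ⟨hx0, hxα⟩ := hcase
      have hPx : P x = 0 := by
        by_contra hne
        exact hnotbad ⟨hxα, x, hx0, hne⟩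
      have hcx : c x = 0 := by simp [hc, hPx, hx0]
      have hfun : (fun t : ℝ => (Pstar x + t * c x) ^ α) = fun _ => (0:ℝ) := by
        funext t
        rw [hx0, hcx]
        simp [Real.zero_rpow hα.ne']
      rw [hfun]
      simp only [hcx, mul_zero]
      exact hasDerivAt_const _ _
  -- full derivative
  have hD : HasDerivAt (fun t : ℝ =>
      (α/(1-α)) * ∑ x, (Pstar x + t * c x) * Q x ^ (α-1)
        - (1/(1-α)) * ∑ x, (Pstar x + t * c x) ^ α + ∑ x, Q x ^ α)
      ((α/(1-α)) * ∑ x, c x * Q x ^ (α-1)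
        - (1/(1-α)) * ∑ x, α * Pstar x ^ (α-1) * c x) 0 :=
    ((hD1.const_mul _).sub (hD2.const_mul _)).add_const _
  -- nonnegativity of the derivative from minimality
  have hD'nonneg : 0 ≤ (α/(1-α)) * ∑ x, c x * Q x ^ (α-1)
      - (1/(1-α)) * ∑ x, α * Pstar x ^ (α-1) * c x := by
    have hslope := hasDerivAt_iff_tendsto_slope.mp hD
    have hsub : Set.Ioi (0:ℝ) ⊆ {(0:ℝ)}ᶜ := fun t ht =>
      Set.mem_compl_singleton_iff.mpr (ne_of_gt ht)
    have hslope' := hslope.mono_left (nhdsWithin_mono (0:ℝ) hsub)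
    refine ge_of_tendsto hslope' ?_
    · filter_upwards [Ioc_mem_nhdsGT_of_mem
        (Set.mem_Ico.mpr ⟨le_refl (0:ℝ), zero_lt_one⟩)] with t ht
      have h := hgmin t ⟨ht.1.le, ht.2⟩
      simp only [slope_def_field]
      apply div_nonneg
      · simp only [zero_mul, add_zero]
        linarith
      · linarith [ht.1]
  -- rewrite the derivative in terms of the basic sums
  have hE1 : ∑ x, c x * Q x ^ (α-1)
      = (∑ x, P x * Q x ^ (α-1)) - ∑ x, Pstar x * Q x ^ (α-1) := by
    rw [← Finset.sum_sub_distrib]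
    exact Finset.sum_congr rfl fun x _ => by simp [hc, sub_mul]
  have hE2 : ∑ x, α * Pstar x ^ (α-1) * c x
      = α * (∑ x, P x * Pstar x ^ (α-1)) - α * ∑ x, Pstar x ^ α := by
    rw [Finset.mul_sum, Finset.mul_sum, ← Finset.sum_sub_distrib]
    refine Finset.sum_congr rfl fun x _ => ?_
    rw [← hIdx x]
    ring
  rw [hE1, hE2] at hD'nonneg
  set S1 := ∑ x, P x * Q x ^ (α-1) with hS1
  set S2 := ∑ x, Pstar x * Q x ^ (α-1) with hS2
  set T1 := ∑ x, P x ^ α with hT1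
  set T2 := ∑ x, Pstar x ^ α with hT2
  set R := ∑ x, P x * Pstar x ^ (α-1) with hR
  set U := ∑ x, Q x ^ α with hU
  have heq : (α / (1-α)) * S1 - (1 / (1-α)) * T1 + U
      - ((α / (1-α)) * R - (1 / (1-α)) * T1 + T2
        + ((α / (1-α)) * S2 - (1 / (1-α)) * T2 + U))
      = (α/(1-α)) * (S1 - S2) - (1/(1-α)) * (α * R - α * T2) := by
    field_simp
    ring
  linarith [hD'nonneg, heq]
end

section
/- Let α < 1 and let P* be the forward B_α-projection of a full-support probability measure Q on a closed convex set C of probability measures on a finite set X. Then the support of P* equals the union of the supports of all members of C. -/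
set_option maxHeartbeats 1000000

open Real Finset

lemma tangent_le {α : ℝ} (hα : 0 < α) (hα1 : α < 1) {u v : ℝ} (hu : 0 < u) (hv : 0 ≤ v) :
    v ^ α ≤ u ^ α + α * u ^ (α - 1) * (v - u) := by
  have hs : (-1 : ℝ) ≤ v / u - 1 := by
    have : 0 ≤ v / u := div_nonneg hv hu.le
    linarith
  have h := rpow_one_add_le_one_add_mul_self hs hα.le hα1.le
  rw [add_sub_cancel] at h
  have hupos := Real.rpow_pos_of_pos hu α
  have key := mul_le_mul_of_nonneg_right h hupos.le
  rw [Real.div_rpow hv hu.le, div_mul_cancel₀ _ hupos.ne'] at key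
  have hus : u ^ (α - 1) = u ^ α / u := by
    rw [Real.rpow_sub hu, Real.rpow_one]
  rw [hus]
  calc v ^ α ≤ (1 + α * (v / u - 1)) * u ^ α := key
    _ = u ^ α + α * (u ^ α / u) * (v - u) := by field_simp

/-- For `α ∈ (0,1)`, the support of the forward `B_α`-projection `P*` of a
full-support `Q` on a closed convex set `C` of probability measures equals the union of
the supports of the members of `C`. -/
theorem Bdiv_forward_projection_support
    {X : Type*} [Fintype X] [Nonempty X]
    (α : ℝ) (hα : 0 < α) (hα1 : α < 1)
    (Q : X → ℝ) (hQ : ∀ x, 0 < Q x) (hQsum : ∑ x, Q x = 1)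
    (C : Set (X → ℝ))
    (hprob : ∀ P ∈ C, (∀ x, 0 ≤ P x) ∧ ∑ x, P x = 1)
    (hclosed : IsClosed C) (hconvex : Convex ℝ C)
    (Pstar : X → ℝ) (hPstar : Pstar ∈ C)
    (hmin : ∀ P ∈ C, Bdiv α Pstar Q ≤ Bdiv α P Q) :
    {x | Pstar x ≠ 0} = {x | ∃ P ∈ C, P x ≠ 0} := by
  classical
  have h1α : (0:ℝ) < 1 - α := by linarith
  set f : (X → ℝ) → ℝ := fun R => (α / (1 - α)) * ∑ x, R x * Q x ^ (α - 1)
      - (1 / (1 - α)) * ∑ x, R x ^ α + ∑ x, Q x ^ α with hfdef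
  have hBdiv : ∀ R : X → ℝ, Bdiv α R Q = ((f R : ℝ) : EReal) := by
    intro R
    rw [Bdiv, if_neg]
    rintro ⟨-, x, hx0, -⟩
    exact (hQ x).ne' hx0
  have hminf : ∀ P ∈ C, f Pstar ≤ f P := by
    intro P hP
    have := hmin P hP
    rw [hBdiv, hBdiv] at this
    exact_mod_cast this
  ext x₀
  simp only [Set.mem_setOf_eq]
  constructor
  · exact fun h => ⟨Pstar, hPstar, h⟩
  · rintro ⟨P, hP, hPx₀⟩
    intro hstar0
    obtain ⟨hPnn, hPsum⟩ := hprob P hP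
    obtain ⟨hSnn, hSsum⟩ := hprob Pstar hPstar
    have hSle1 : ∀ x, Pstar x ≤ 1 := by
      intro x
      rw [← hSsum]
      exact Finset.single_le_sum (fun y _ => hSnn y) (mem_univ x)
    have hb : 0 < P x₀ := lt_of_le_of_ne (hPnn x₀) (Ne.symm hPx₀)
    set b := P x₀ with hbdef
    set A := α / (1 - α) with hAdef
    set B := 1 / (1 - α) with hBdef2
    have hA : 0 < A := div_pos hα h1α
    have hB : 0 < B := div_pos one_pos h1α
    set D := ∑ x, (P x - Pstar x) * Q x ^ (α - 1) with hDdef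
    set k : X → ℝ := fun x => α * (Pstar x / 2) ^ (α - 1) with hkdef
    have hk0 : ∀ x, Pstar x = 0 → k x = 0 := by
      intro x h
      simp [hkdef, h, Real.zero_rpow (show α - 1 ≠ 0 by intro h'; linarith)]
    have hknn : ∀ x, 0 ≤ k x := fun x =>
      mul_nonneg hα.le (Real.rpow_nonneg (div_nonneg (hSnn x) two_pos.le) _)
    set K := ∑ x, k x with hKdef
    have hK : 0 ≤ K := Finset.sum_nonneg fun x _ => hknn x
    set c := max (A * D + B * K) 1 with hcdef
    have hc : 0 < c := lt_of_lt_of_le one_pos (le_max_right _ _)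
    set ε := B * b ^ α with hεdef
    have hε : 0 < ε := mul_pos hB (Real.rpow_pos_of_pos hb α)
    have hδ : 0 < ε / (2 * c) := div_pos hε (by linarith)
    set t₀ := Finset.univ.inf' Finset.univ_nonempty
        (fun x => if Pstar x = 0 then 1 else Pstar x / 2) with ht₀def
    have ht₀pos : 0 < t₀ := by
      rw [ht₀def, Finset.lt_inf'_iff]
      intro x _
      split
      · norm_num
      · next h => exact half_pos (lt_of_le_of_ne (hSnn x) (Ne.symm h))
    set t := min (min t₀ 1) ((ε / (2 * c)) ^ (1 / (1 - α))) with htdef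
    have ht : 0 < t := lt_min (lt_min ht₀pos one_pos) (Real.rpow_pos_of_pos hδ _)
    have ht1 : t ≤ 1 := le_trans (min_le_left _ _) (min_le_right _ _)
    have htt₀ : ∀ x, Pstar x ≠ 0 → t ≤ Pstar x / 2 := by
      intro x hx
      have h1 : t ≤ t₀ := le_trans (min_le_left _ _) (min_le_left _ _)
      have h2 : t₀ ≤ if Pstar x = 0 then 1 else Pstar x / 2 :=
        Finset.inf'_le _ (mem_univ x)
      rw [if_neg hx] at h2
      linarith
    set Pt : X → ℝ := fun x => (1 - t) * Pstar x + t * P x with hPtdef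
    have hPtnn : ∀ x, 0 ≤ Pt x := fun x =>
      add_nonneg (mul_nonneg (by linarith) (hSnn x)) (mul_nonneg ht.le (hPnn x))
    have hPtC : Pt ∈ C :=
      hconvex hPstar hP (by linarith : (0:ℝ) ≤ 1 - t) ht.le (by ring)
    have hle := hminf Pt hPtC
    -- linear part
    have hlin : ∑ x, Pt x * Q x ^ (α - 1) = (∑ x, Pstar x * Q x ^ (α - 1)) + t * D := by
      rw [hDdef, Finset.mul_sum, ← Finset.sum_add_distrib]
      exact Finset.sum_congr rfl fun x _ => by simp only [hPtdef]; ring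
    -- power sum estimate
    have hx₀term : (Pt x₀) ^ α = t ^ α * b ^ α := by
      have : Pt x₀ = t * b := by simp [hPtdef, hstar0]; exact Or.inl rfl
      rw [this, Real.mul_rpow ht.le hb.le]
    have hother : ∀ x, (Pstar x) ^ α - k x * t ≤ (Pt x) ^ α := by
      intro x
      rcases eq_or_lt_of_le (hSnn x) with h | h
      · rw [← h, Real.zero_rpow hα.ne', hk0 x h.symm]
        simpa using Real.rpow_nonneg (hPtnn x) α
      · have hux : Pstar x / 2 ≤ Pt x := by
          have h1 : t ≤ Pstar x / 2 := htt₀ x h.ne'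
          have h2 : t * P x ≥ 0 := mul_nonneg ht.le (hPnn x)
          have h3 : t * Pstar x ≤ t := by
            nlinarith [hSle1 x, ht.le]
          simp only [hPtdef]
          nlinarith
        have hupos : 0 < Pt x := lt_of_lt_of_le (half_pos h) hux
        have htang := tangent_le hα hα1 hupos (hSnn x)
        have hmono : Pt x ^ (α - 1) ≤ (Pstar x / 2) ^ (α - 1) :=
          Real.rpow_le_rpow_of_nonpos (half_pos h) hux (by linarith)
        have hdiff : Pstar x - Pt x ≤ t := by
          have : Pstar x - Pt x = t * (Pstar x - P x) := by simp only [hPtdef]; ring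
          rw [this]
          have h5 : Pstar x - P x ≤ 1 := by linarith [hSle1 x, hPnn x]
          calc t * (Pstar x - P x) ≤ t * 1 := mul_le_mul_of_nonneg_left h5 ht.le
            _ = t := mul_one t
        have hbnd : α * Pt x ^ (α - 1) * (Pstar x - Pt x) ≤ k x * t := by
          rcases le_or_gt (Pstar x - Pt x) 0 with hd | hd
          · have : α * Pt x ^ (α - 1) * (Pstar x - Pt x) ≤ 0 :=
              mul_nonpos_of_nonneg_of_nonpos
                (mul_nonneg hα.le (Real.rpow_nonneg hupos.le _)) hd
            exact this.trans (mul_nonneg (hknn x) ht.le)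
          · have h1 : α * Pt x ^ (α - 1) ≤ k x :=
              mul_le_mul_of_nonneg_left hmono hα.le
            have h2 : α * Pt x ^ (α - 1) * (Pstar x - Pt x) ≤ k x * (Pstar x - Pt x) :=
              mul_le_mul_of_nonneg_right h1 hd.le
            exact h2.trans (mul_le_mul_of_nonneg_left hdiff (hknn x))
        linarith [htang, hbnd]
    have hpow : (∑ x, (Pstar x) ^ α) + t ^ α * b ^ α - K * t ≤ ∑ x, (Pt x) ^ α := by
      have e1 : ∑ x, (Pt x) ^ α = (Pt x₀) ^ α + ∑ x ∈ univ.erase x₀, (Pt x) ^ α :=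
        (Finset.add_sum_erase _ _ (mem_univ x₀)).symm
      have e2 : ∑ x, ((Pstar x) ^ α - k x * t)
          = ((Pstar x₀) ^ α - k x₀ * t) + ∑ x ∈ univ.erase x₀, ((Pstar x) ^ α - k x * t) :=
        (Finset.add_sum_erase _ _ (mem_univ x₀)).symm
      have e3 : (Pstar x₀) ^ α - k x₀ * t = 0 := by
        rw [hstar0, Real.zero_rpow hα.ne', hk0 x₀ hstar0]; ring
      have e4 : ∑ x, ((Pstar x) ^ α - k x * t)
          = (∑ x, (Pstar x) ^ α) - K * t := by
        rw [hKdef, Finset.sum_sub_distrib, ← Finset.sum_mul]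
      have e5 : ∑ x ∈ univ.erase x₀, ((Pstar x) ^ α - k x * t)
          ≤ ∑ x ∈ univ.erase x₀, (Pt x) ^ α :=
        Finset.sum_le_sum fun x _ => hother x
      rw [e3, zero_add] at e2
      have e6 : (∑ x, (Pstar x) ^ α) - K * t ≤ ∑ x ∈ univ.erase x₀, (Pt x) ^ α := by
        rw [← e4, e2]; exact e5
      rw [e1, hx₀term]
      linarith [e6]
    -- combine
    have hfPt : f Pt = f Pstar + A * (t * D)
        - B * ((∑ x, (Pt x) ^ α) - ∑ x, (Pstar x) ^ α) := by
      simp only [hfdef, hlin]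
      ring
    have hBpow : B * (t ^ α * b ^ α - K * t)
        ≤ B * ((∑ x, (Pt x) ^ α) - ∑ x, (Pstar x) ^ α) :=
      mul_le_mul_of_nonneg_left (by linarith) hB.le
    have hup : f Pt ≤ f Pstar + t * (A * D + B * K) - ε * t ^ α := by
      rw [hfPt, hεdef]
      linarith [hBpow]
    have htα : 0 < t ^ α := Real.rpow_pos_of_pos ht α
    have hsplit : t = t ^ α * t ^ (1 - α) := by
      rw [← Real.rpow_add ht]
      norm_num
    have htle : t ^ (1 - α) ≤ ε / (2 * c) := by
      have h1 : t ≤ (ε / (2 * c)) ^ (1 / (1 - α)) := min_le_right _ _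
      have h2 := Real.rpow_le_rpow ht.le h1 h1α.le
      rwa [← Real.rpow_mul hδ.le, one_div_mul_cancel h1α.ne', Real.rpow_one] at h2
    have h3 : t * c < ε * t ^ α := by
      calc t * c = t ^ α * (t ^ (1 - α) * c) := by rw [← mul_assoc, ← hsplit]
        _ ≤ t ^ α * (ε / (2 * c) * c) := by
            apply mul_le_mul_of_nonneg_left (mul_le_mul_of_nonneg_right htle hc.le) htα.le
        _ = t ^ α * (ε / 2) := by field_simp
        _ < t ^ α * ε := mul_lt_mul_of_pos_left (by linarith) htα
        _ = ε * t ^ α := mul_comm _ _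
    have h4 : t * (A * D + B * K) ≤ t * c :=
      mul_le_mul_of_nonneg_left (le_max_left _ _) ht.le
    linarith
end

section
/- Let α < 1, let L = {P : Σ_x P(x) f_i(x) = a_i, i=1,…,k} be a linear family of probability measures on a finite set X, and let P* be the forward B_α-projection of a full-support Q on L. Then the Pythagorean equality holds: B_α(P,Q) = B_α(P,P*) + B_α(P*,Q) for every P ∈ L. -/
open Real Finset

private lemma tangent_rpow {α x y : ℝ} (hα : 0 < α) (hα1 : α < 1) (hx : 0 < x) (hy : 0 ≤ y) :
    y ^ α ≤ x ^ α + α * x ^ (α - 1) * (y - x) := by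
  have hs : (-1 : ℝ) ≤ y / x - 1 := by
    have : 0 ≤ y / x := div_nonneg hy hx.le
    linarith
  have h := rpow_one_add_le_one_add_mul_self hs hα.le hα1.le
  have h1 : (1 + (y / x - 1)) = y / x := by ring
  rw [h1] at h
  have hxα : 0 < x ^ α := rpow_pos_of_pos hx α
  have h2 : (y / x) ^ α = y ^ α / x ^ α := Real.div_rpow hy hx.le α
  rw [h2] at h
  have h3 := mul_le_mul_of_nonneg_right h hxα.le
  rw [div_mul_cancel₀ _ hxα.ne'] at h3
  calc y ^ α ≤ (1 + α * (y / x - 1)) * x ^ α := h3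
    _ = x ^ α + α * x ^ (α - 1) * (y - x) := by
        rw [Real.rpow_sub hx, Real.rpow_one]
        field_simp

private lemma Bdiv_coe {X : Type*} [Fintype X] {α : ℝ} (P Q : X → ℝ)
    (h : ∀ x, Q x = 0 → P x = 0) :
    Bdiv α P Q
    = (((α / (1 - α)) * ∑ x, P x * Q x ^ (α - 1)
          - (1 / (1 - α)) * ∑ x, P x ^ α + ∑ x, Q x ^ α : ℝ) : EReal) := by
  rw [Bdiv, if_neg]
  rintro ⟨-, x, hx, hx'⟩
  exact hx' (h x hx)

set_option maxHeartbeats 1000000 in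
/-- For `α ∈ (0,1)`, if `P*` is the forward `B_α`-projection of a
full-support `Q` on the linear family `L = {P : Σ_x P(x) f_i(x) = a_i}`, then the
Pythagorean equality `B_α(P,Q) = B_α(P,P*) + B_α(P*,Q)` holds for every `P ∈ L`. -/
theorem Bdiv_pythagorean_equality_linear_family
    {X : Type*} [Fintype X] [Nonempty X] {k : ℕ}
    (α : ℝ) (hα : 0 < α) (hα1 : α < 1)
    (Q : X → ℝ) (hQ : ∀ x, 0 < Q x) (hQsum : ∑ x, Q x = 1)
    (f : Fin k → X → ℝ) (a : Fin k → ℝ)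
    (L : Set (X → ℝ))
    (hL : L = {P | (∀ x, 0 ≤ P x) ∧ ∑ x, P x = 1 ∧ ∀ i, ∑ x, P x * f i x = a i})
    (hLne : L.Nonempty)
    (Pstar : X → ℝ) (hPstar : Pstar ∈ L)
    (hmin : ∀ P ∈ L, Bdiv α Pstar Q ≤ Bdiv α P Q) :
    ∀ P ∈ L, Bdiv α P Q = Bdiv α P Pstar + Bdiv α Pstar Q := by
  classical
  have h1α : (0 : ℝ) < 1 - α := by linarith
  have hc : (0 : ℝ) < α / (1 - α) := div_pos hα h1α
  have hd : (0 : ℝ) < 1 / (1 - α) := by positivity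
  intro P hP
  rw [hL] at hP hPstar
  obtain ⟨hPnn, hPsum, hPlin⟩ := hP
  obtain ⟨hSnn, hSsum, hSlin⟩ := hPstar
  -- real-valued minimality
  have key : ∀ R : X → ℝ, (∀ x, 0 ≤ R x) → (∑ x, R x = 1) →
      (∀ i, ∑ x, R x * f i x = a i) →
      (α / (1 - α)) * ∑ x, Pstar x * Q x ^ (α - 1) - (1 / (1 - α)) * ∑ x, Pstar x ^ α
        ≤ (α / (1 - α)) * ∑ x, R x * Q x ^ (α - 1) - (1 / (1 - α)) * ∑ x, R x ^ α := by
    intro R h1 h2 h3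
    have h4 := hmin R (by rw [hL]; exact ⟨h1, h2, h3⟩)
    rw [Bdiv_coe Pstar Q (fun x hx => absurd hx (hQ x).ne'),
        Bdiv_coe R Q (fun x hx => absurd hx (hQ x).ne'), EReal.coe_le_coe_iff] at h4
    linarith
  -- Step 1 : support of P is contained in support of Pstar
  have hsupp : ∀ x, Pstar x = 0 → P x = 0 := by
    by_contra hcon
    push_neg at hcon
    obtain ⟨x0, hx0, hPx0ne⟩ := hcon
    have hPx0 : 0 < P x0 := (hPnn x0).lt_of_ne (Ne.symm hPx0ne)
    set A : ℝ := (∑ x, P x * Q x ^ (α - 1)) - ∑ x, Pstar x * Q x ^ (α - 1) with hA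
    set T2 : ℝ := ∑ x, Pstar x ^ α with hT2
    set M : ℝ := P x0 ^ α with hM
    have hM0 : 0 < M := rpow_pos_of_pos hPx0 α
    set B : ℝ := (α / (1 - α)) * A + (1 / (1 - α)) * T2 with hB
    have hdM : 0 < 1 / (1 - α) * M := by positivity
    set t : ℝ := min (1 / 2) ((1 / (1 - α) * M / (|B| + 1)) ^ (1 / (1 - α))) with ht
    have ht0 : 0 < t := lt_min (by norm_num) (rpow_pos_of_pos (by positivity) _)
    have ht1 : t < 1 := lt_of_le_of_lt (min_le_left _ _) (by norm_num)
    have htpow : t ^ (1 - α) ≤ 1 / (1 - α) * M / (|B| + 1) := by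
      calc t ^ (1 - α)
          ≤ ((1 / (1 - α) * M / (|B| + 1)) ^ (1 / (1 - α))) ^ (1 - α) :=
            Real.rpow_le_rpow ht0.le (min_le_right _ _) h1α.le
        _ = (1 / (1 - α) * M / (|B| + 1)) ^ ((1 / (1 - α)) * (1 - α)) := by
            rw [← Real.rpow_mul (by positivity)]
        _ = 1 / (1 - α) * M / (|B| + 1) := by
            rw [one_div_mul_cancel h1α.ne', Real.rpow_one]
    set R : X → ℝ := fun x => (1 - t) * Pstar x + t * P x with hR
    have hRnn : ∀ x, 0 ≤ R x := fun x => by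
      have := hSnn x; have := hPnn x; simp only [hR]; nlinarith
    have hRsum : ∑ x, R x = 1 := by
      simp only [hR]
      rw [Finset.sum_add_distrib, ← Finset.mul_sum, ← Finset.mul_sum, hPsum, hSsum]
      ring
    have hRlin : ∀ i, ∑ x, R x * f i x = a i := by
      intro i
      have e : ∑ x, R x * f i x
          = (1 - t) * ∑ x, Pstar x * f i x + t * ∑ x, P x * f i x := by
        rw [Finset.mul_sum, Finset.mul_sum, ← Finset.sum_add_distrib]
        exact Finset.sum_congr rfl fun x _ => by simp only [hR]; ring
      rw [e, hSlin i, hPlin i]; ring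
    have hle := key R hRnn hRsum hRlin
    -- rewrite the two sums for R
    have eQ : ∑ x, R x * Q x ^ (α - 1) = ∑ x, Pstar x * Q x ^ (α - 1) + t * A := by
      have e : ∑ x, R x * Q x ^ (α - 1)
          = (1 - t) * ∑ x, Pstar x * Q x ^ (α - 1) + t * ∑ x, P x * Q x ^ (α - 1) := by
        rw [Finset.mul_sum, Finset.mul_sum, ← Finset.sum_add_distrib]
        exact Finset.sum_congr rfl fun x _ => by simp only [hR]; ring
      rw [e, hA]; ring
    -- lower bound on ∑ R^α
    have hpow : ∀ x, (1 - t) * Pstar x ^ α + (if x = x0 then t ^ α * M else 0) ≤ R x ^ α := by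
      intro x
      by_cases hx : x = x0
      · subst hx
        have e1 : R x = t * P x := by simp only [hR, hx0]; ring
        rw [e1, Real.mul_rpow ht0.le (hPnn x), if_pos rfl, hx0,
            Real.zero_rpow hα.ne']
        simp [hM]
      · rw [if_neg hx, add_zero]
        have h1 : (1 - t) * Pstar x ≤ R x := by
          have := mul_nonneg ht0.le (hPnn x); simp only [hR]; linarith
        have h2 : ((1 - t) * Pstar x) ^ α ≤ R x ^ α :=
          Real.rpow_le_rpow (mul_nonneg (by linarith) (hSnn x)) h1 hα.le
        have h3 : ((1 - t) * Pstar x) ^ α = (1 - t) ^ α * Pstar x ^ α :=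
          Real.mul_rpow (by linarith) (hSnn x)
        have h4 : (1 - t) ^ (1 : ℝ) ≤ (1 - t) ^ α :=
          Real.rpow_le_rpow_of_exponent_ge (by linarith) (by linarith) hα1.le
        rw [Real.rpow_one] at h4
        have h5 : 0 ≤ Pstar x ^ α := Real.rpow_nonneg (hSnn x) α
        nlinarith
    have hsumpow : (1 - t) * T2 + t ^ α * M ≤ ∑ x, R x ^ α := by
      have h6 := Finset.sum_le_sum (fun x (_ : x ∈ Finset.univ) => hpow x)
      rw [Finset.sum_add_distrib, ← Finset.mul_sum,
          Finset.sum_ite_eq' Finset.univ x0 (fun _ => t ^ α * M)] at h6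
      simpa using h6
    -- contradiction
    have hTnn : 0 ≤ T2 := Finset.sum_nonneg fun x _ => Real.rpow_nonneg (hSnn x) α
    have hlt : t * B - (1 / (1 - α)) * (t ^ α * M) < 0 := by
      have htα : 0 < t ^ α := rpow_pos_of_pos ht0 α
      have h7 : t ^ (1 - α) * |B| < 1 / (1 - α) * M := by
        have h8 : t ^ (1 - α) * |B| ≤ (1 / (1 - α) * M / (|B| + 1)) * |B| :=
          mul_le_mul_of_nonneg_right htpow (abs_nonneg B)
        have h9 : (1 / (1 - α) * M / (|B| + 1)) * |B| < 1 / (1 - α) * M := by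
          rw [div_mul_eq_mul_div, div_lt_iff₀ (by positivity)]
          nlinarith [abs_nonneg B]
        linarith
      have h10 : t * B ≤ t * |B| := mul_le_mul_of_nonneg_left (le_abs_self B) ht0.le
      have h11 : t * |B| = t ^ α * (t ^ (1 - α) * |B|) := by
        rw [← mul_assoc, ← Real.rpow_add ht0]; norm_num
      have h12 : t ^ α * (t ^ (1 - α) * |B|) < t ^ α * (1 / (1 - α) * M) :=
        mul_lt_mul_of_pos_left h7 htα
      have h13 : t ^ α * (1 / (1 - α) * M) = 1 / (1 - α) * (t ^ α * M) := by ring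
      have h14 := lt_of_le_of_lt (h10.trans_eq h11) h12
      rw [h13] at h14
      linarith
    rw [eQ] at hle
    -- hle : c*ΣP*Q' - d*T2 ≤ c*(ΣP*Q' + t*A) - d*ΣR^α
    have h12 : (1 / (1 - α)) * ((1 - t) * T2 + t ^ α * M) ≤ (1 / (1 - α)) * ∑ x, R x ^ α :=
      mul_le_mul_of_nonneg_left hsumpow hd.le
    have h13 : (α / (1 - α)) * (∑ x, Pstar x * Q x ^ (α - 1) + t * A)
        = (α / (1 - α)) * ∑ x, Pstar x * Q x ^ (α - 1) + (α / (1 - α)) * (t * A) := by ring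
    rw [h13] at hle
    -- combine everything
    have hfin : (α / (1 - α)) * (t * A) + (1 / (1 - α)) * (t * T2)
        - (1 / (1 - α)) * (t ^ α * M) ≥ 0 := by
      have e2 : (1 / (1 - α)) * ((1 - t) * T2 + t ^ α * M)
          = (1 / (1 - α)) * T2 - (1 / (1 - α)) * (t * T2) + (1 / (1 - α)) * (t ^ α * M) := by
        ring
      rw [e2] at h12
      linarith
    have : t * B = (α / (1 - α)) * (t * A) + (1 / (1 - α)) * (t * T2) := by
      rw [hB]; ring
    linarith
  -- Step 2 : first-order condition : the "inner product" is ≥/≤ 0 in both directions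
  have hXne : (Finset.univ : Finset X).Nonempty := Finset.univ_nonempty
  set δ : ℝ := min (1 / 2)
      (Finset.univ.inf' hXne fun x =>
        if Pstar x = 0 then 1 else Pstar x / (|P x - Pstar x| + 1)) with hδ
  have hδpos : 0 < δ := by
    refine lt_min (by norm_num) ?_
    rw [Finset.lt_inf'_iff]
    intro x _
    by_cases hx : Pstar x = 0
    · rw [if_pos hx]; norm_num
    · rw [if_neg hx]
      have := (hSnn x).lt_of_ne (Ne.symm hx)
      positivity
  have hδle : ∀ x, Pstar x ≠ 0 → δ ≤ Pstar x / (|P x - Pstar x| + 1) := by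
    intro x hx
    refine le_trans (min_le_right _ _) (le_trans (Finset.inf'_le _ (Finset.mem_univ x)) ?_)
    rw [if_neg hx]
  have hψ : ∀ t : ℝ, |t| ≤ δ →
      0 ≤ t * ∑ x, (P x - Pstar x) *
        (Q x ^ (α - 1) - (Pstar x + t * (P x - Pstar x)) ^ (α - 1)) := by
    intro t htδ
    set R : X → ℝ := fun x => Pstar x + t * (P x - Pstar x) with hR
    have hRpos : ∀ x, Pstar x ≠ 0 → 0 < R x := by
      intro x hx
      have hps : 0 < Pstar x := (hSnn x).lt_of_ne (Ne.symm hx)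
      have hb : |t * (P x - Pstar x)| < Pstar x := by
        rw [abs_mul]
        calc |t| * |P x - Pstar x|
            ≤ (Pstar x / (|P x - Pstar x| + 1)) * |P x - Pstar x| :=
              mul_le_mul (le_trans htδ (hδle x hx)) le_rfl (abs_nonneg _) (by positivity)
          _ < Pstar x := by
              rw [div_mul_eq_mul_div, div_lt_iff₀ (by positivity)]
              nlinarith [abs_nonneg (P x - Pstar x)]
      have h1 := (abs_lt.mp hb).1
      simp only [hR]
      linarith
    have hR0 : ∀ x, Pstar x = 0 → R x = 0 := by
      intro x hx; simp [hR, hx, hsupp x hx]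
    have hRnn : ∀ x, 0 ≤ R x := by
      intro x
      by_cases hx : Pstar x = 0
      · rw [hR0 x hx]
      · exact (hRpos x hx).le
    have hRsum : ∑ x, R x = 1 := by
      have e : ∑ x, R x = ∑ x, Pstar x + t * (∑ x, P x - ∑ x, Pstar x) := by
        rw [← Finset.sum_sub_distrib, Finset.mul_sum, ← Finset.sum_add_distrib]
        all_goals exact Finset.sum_congr rfl fun x _ => by simp only [hR]; ring
      rw [e, hPsum, hSsum]; ring
    have hRlin : ∀ i, ∑ x, R x * f i x = a i := by
      intro i
      have e : ∑ x, R x * f i x = ∑ x, Pstar x * f i x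
          + t * (∑ x, P x * f i x - ∑ x, Pstar x * f i x) := by
        rw [← Finset.sum_sub_distrib, Finset.mul_sum, ← Finset.sum_add_distrib]
        all_goals exact Finset.sum_congr rfl fun x _ => by simp only [hR]; ring
      rw [e, hPlin i, hSlin i]; ring
    have hle := key R hRnn hRsum hRlin
    have eQ : ∑ x, R x * Q x ^ (α - 1) = ∑ x, Pstar x * Q x ^ (α - 1)
        + t * ∑ x, (P x - Pstar x) * Q x ^ (α - 1) := by
      rw [Finset.mul_sum, ← Finset.sum_add_distrib]
      all_goals exact Finset.sum_congr rfl fun x _ => by simp only [hR]; ring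
    have htan : ∀ x, α * R x ^ (α - 1) * (t * (P x - Pstar x)) ≤ R x ^ α - Pstar x ^ α := by
      intro x
      by_cases hx : Pstar x = 0
      · rw [hR0 x hx, hx, hsupp x hx]
        simp [Real.zero_rpow hα.ne', Real.zero_rpow (show α - 1 ≠ 0 by linarith)]
      · have h1 := tangent_rpow hα hα1 (hRpos x hx) (hSnn x)
        have h2 : Pstar x - R x = -(t * (P x - Pstar x)) := by simp only [hR]; ring
        rw [h2] at h1
        nlinarith [h1]
    have htansum : α * (t * ∑ x, (P x - Pstar x) * R x ^ (α - 1))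
        ≤ (∑ x, R x ^ α) - ∑ x, Pstar x ^ α := by
      have h3 := Finset.sum_le_sum (fun x (_ : x ∈ Finset.univ) => htan x)
      rw [Finset.sum_sub_distrib] at h3
      refine le_trans (le_of_eq ?_) h3
      rw [Finset.mul_sum, Finset.mul_sum]
      exact Finset.sum_congr rfl fun x _ => by ring
    rw [eQ] at hle
    have h5 : (α / (1 - α)) * (∑ x, Pstar x * Q x ^ (α - 1)
          + t * ∑ x, (P x - Pstar x) * Q x ^ (α - 1))
        = (α / (1 - α)) * ∑ x, Pstar x * Q x ^ (α - 1)
          + (α / (1 - α)) * (t * ∑ x, (P x - Pstar x) * Q x ^ (α - 1)) := by ring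
    rw [h5] at hle
    have h4 : (1 / (1 - α)) * ((∑ x, R x ^ α) - ∑ x, Pstar x ^ α)
        ≤ (α / (1 - α)) * (t * ∑ x, (P x - Pstar x) * Q x ^ (α - 1)) := by
      have h6 : (1 / (1 - α)) * ((∑ x, R x ^ α) - ∑ x, Pstar x ^ α)
          = (1 / (1 - α)) * ∑ x, R x ^ α - (1 / (1 - α)) * ∑ x, Pstar x ^ α := by ring
      rw [h6]; linarith
    have h7 := mul_le_mul_of_nonneg_left htansum hd.le
    have h8 : (1 / (1 - α)) * (α * (t * ∑ x, (P x - Pstar x) * R x ^ (α - 1)))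
        = (α / (1 - α)) * (t * ∑ x, (P x - Pstar x) * R x ^ (α - 1)) := by ring
    rw [h8] at h7
    have h10 : (α / (1 - α)) * (t * ∑ x, (P x - Pstar x) * R x ^ (α - 1))
        ≤ (α / (1 - α)) * (t * ∑ x, (P x - Pstar x) * Q x ^ (α - 1)) := le_trans h7 h4
    have h9 : t * ∑ x, (P x - Pstar x) * R x ^ (α - 1)
        ≤ t * ∑ x, (P x - Pstar x) * Q x ^ (α - 1) := le_of_mul_le_mul_left h10 hc
    have hsplit : ∑ x, (P x - Pstar x) *
          (Q x ^ (α - 1) - (Pstar x + t * (P x - Pstar x)) ^ (α - 1))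
        = (∑ x, (P x - Pstar x) * Q x ^ (α - 1))
          - ∑ x, (P x - Pstar x) * R x ^ (α - 1) := by
      rw [← Finset.sum_sub_distrib]
      all_goals exact Finset.sum_congr rfl fun x _ => by simp only [hR]; ring
    rw [hsplit, mul_sub]
    linarith
  -- Step 3 : the inner product is zero, by continuity
  have hD : ∑ x, (P x - Pstar x) * (Q x ^ (α - 1) - Pstar x ^ (α - 1)) = 0 := by
    have hcont : ContinuousAt (fun t : ℝ => ∑ x, (P x - Pstar x) *
        (Q x ^ (α - 1) - (Pstar x + t * (P x - Pstar x)) ^ (α - 1))) 0 := by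
      apply tendsto_finset_sum
      intro x _
      show ContinuousAt (fun t : ℝ => (P x - Pstar x) *
          (Q x ^ (α - 1) - (Pstar x + t * (P x - Pstar x)) ^ (α - 1))) 0
      by_cases hx : Pstar x = 0
      · have he : (fun t : ℝ => (P x - Pstar x) *
            (Q x ^ (α - 1) - (Pstar x + t * (P x - Pstar x)) ^ (α - 1)))
            = fun _ => 0 := by
          funext t; rw [hsupp x hx, hx]; ring
        rw [he]; exact continuousAt_const
      · refine continuousAt_const.mul (continuousAt_const.sub ?_)
        refine ContinuousAt.rpow_const ?_ (Or.inl ?_)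
        · exact continuousAt_const.add (continuousAt_id.mul continuousAt_const)
        · simpa using hx
    have hval : (∑ x, (P x - Pstar x) *
          (Q x ^ (α - 1) - (Pstar x + (0:ℝ) * (P x - Pstar x)) ^ (α - 1)))
        = ∑ x, (P x - Pstar x) * (Q x ^ (α - 1) - Pstar x ^ (α - 1)) := by
      simp
    by_contra hne
    rcases (Ne.lt_or_gt hne) with hlt | hgt
    · -- the sum is negative : take a small positive t
      have hev : ∀ᶠ s in nhds (0 : ℝ), (fun t : ℝ => ∑ x, (P x - Pstar x) *
          (Q x ^ (α - 1) - (Pstar x + t * (P x - Pstar x)) ^ (α - 1))) s < 0 :=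
        hcont.eventually_lt_const (by simpa [hval] using hlt) |>.mono (fun s hs => hs)
      obtain ⟨ε, hε, hball⟩ := Metric.eventually_nhds_iff.mp hev
      set s : ℝ := min δ (ε / 2) with hs
      have hs0 : 0 < s := lt_min hδpos (half_pos hε)
      have h1 : (fun t : ℝ => ∑ x, (P x - Pstar x) *
          (Q x ^ (α - 1) - (Pstar x + t * (P x - Pstar x)) ^ (α - 1))) s < 0 := by
        apply hball
        rw [Real.dist_eq, sub_zero, abs_of_pos hs0]
        exact lt_of_le_of_lt (min_le_right _ _) (by linarith)
      have h1' : (∑ x, (P x - Pstar x) *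
          (Q x ^ (α - 1) - (Pstar x + s * (P x - Pstar x)) ^ (α - 1))) < 0 := h1
      have h2 := hψ s (by rw [abs_of_pos hs0]; exact min_le_left _ _)
      nlinarith
    · -- the sum is positive : take a small negative t
      have hev : ∀ᶠ s in nhds (0 : ℝ), 0 < (fun t : ℝ => ∑ x, (P x - Pstar x) *
          (Q x ^ (α - 1) - (Pstar x + t * (P x - Pstar x)) ^ (α - 1))) s :=
        hcont.eventually_const_lt (by simpa [hval] using hgt)
      obtain ⟨ε, hε, hball⟩ := Metric.eventually_nhds_iff.mp hev
      set s : ℝ := -min δ (ε / 2) with hs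
      have hm0 : 0 < min δ (ε / 2) := lt_min hδpos (half_pos hε)
      have hs0 : s < 0 := by rw [hs]; linarith
      have h1 : 0 < (fun t : ℝ => ∑ x, (P x - Pstar x) *
          (Q x ^ (α - 1) - (Pstar x + t * (P x - Pstar x)) ^ (α - 1))) s := by
        apply hball
        rw [Real.dist_eq, sub_zero, hs, abs_neg, abs_of_pos hm0]
        exact lt_of_le_of_lt (min_le_right _ _) (by linarith)
      have h1' : 0 < ∑ x, (P x - Pstar x) *
          (Q x ^ (α - 1) - (Pstar x + s * (P x - Pstar x)) ^ (α - 1)) := h1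
      have h2 := hψ s (by rw [abs_of_neg hs0, hs, neg_neg]; exact min_le_left _ _)
      nlinarith
  -- Step 4 : conclude by algebra
  have hD' : (∑ x, P x * Q x ^ (α - 1)) - (∑ x, P x * Pstar x ^ (α - 1))
      - (∑ x, Pstar x * Q x ^ (α - 1)) + (∑ x, Pstar x ^ α) = 0 := by
    have expand : ∑ x, (P x - Pstar x) * (Q x ^ (α - 1) - Pstar x ^ (α - 1))
        = ∑ x, (P x * Q x ^ (α - 1) - P x * Pstar x ^ (α - 1)
            - Pstar x * Q x ^ (α - 1) + Pstar x ^ α) := by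
      refine Finset.sum_congr rfl fun x _ => ?_
      by_cases hx : Pstar x = 0
      · rw [hx, hsupp x hx, Real.zero_rpow hα.ne',
            Real.zero_rpow (show α - 1 ≠ 0 by linarith)]
        ring
      · have hps : 0 < Pstar x := (hSnn x).lt_of_ne (Ne.symm hx)
        have e : Pstar x ^ α = Pstar x * Pstar x ^ (α - 1) := by
          rw [show α = 1 + (α - 1) by ring, Real.rpow_add hps, Real.rpow_one]
          ring_nf
        rw [e]; ring
    rw [expand] at hD
    rw [Finset.sum_add_distrib, Finset.sum_sub_distrib, Finset.sum_sub_distrib] at hD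
    exact hD
  rw [Bdiv_coe P Q (fun x hx => absurd hx (hQ x).ne'),
      Bdiv_coe Pstar Q (fun x hx => absurd hx (hQ x).ne'),
      Bdiv_coe P Pstar hsupp, ← EReal.coe_add, EReal.coe_eq_coe_iff]
  have h1αne : (1 : ℝ) - α ≠ 0 := h1α.ne'
  field_simp
  linear_combination α * hD'
end

section
/- Let α < 1 and let P* be the forward B_α-projection of a full-support Q on the linear family L = {P : Σ_x P(x)f_i(x) = a_i, i=1,…,k}. Then there exist scalars θ_1,…,θ_k and a constant Z such that P*(x) = [Q(x)^{α-1} + (1-α)(Z + Σ_i θ_i f_i(x))]^{1/(α-1)} for all x in Supp(L). -/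
open Real Finset

/-- The density power divergence `B_α` (real-valued formula; finite here since the
second argument is taken with full support). -/
noncomputable def BdivR {X : Type*} [Fintype X] (α : ℝ) (P Q : X → ℝ) : ℝ :=
  (α / (1 - α)) * ∑ x, P x * Q x ^ (α - 1)
    - (1 / (1 - α)) * ∑ x, P x ^ α + ∑ x, Q x ^ α

/-- Auxiliary linear functional `v ↦ ∑ x, g x * v x`. -/
noncomputable def sumLin {σ : Type*} [Fintype σ] (g : σ → ℝ) : (σ → ℝ) →ₗ[ℝ] ℝ where
  toFun v := ∑ x, g x * v x
  map_add' u v := by simp [mul_add, Finset.sum_add_distrib]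
  map_smul' r v := by
    simp only [smul_eq_mul, RingHom.id_apply, Finset.mul_sum, Pi.smul_apply]
    exact Finset.sum_congr rfl fun _ _ => by ring

lemma sumLin_apply {σ : Type*} [Fintype σ] (g v : σ → ℝ) : sumLin g v = ∑ x, g x * v x := rfl

lemma sumLin_single {σ : Type*} [Fintype σ] [DecidableEq σ] (g : σ → ℝ) (x : σ) :
    sumLin g (Pi.single x 1) = g x := by
  rw [sumLin_apply]
  rw [Finset.sum_eq_single x]
  · simp
  · intro y _ hy; simp [Pi.single_eq_of_ne hy]
  · simp

/-- For `α ∈ (0,1)`, the forward `B_α`-projection `P*` of a full-support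
`Q` on a linear family `L` has the power-law form
`P*(x) = [Q(x)^{α-1} + (1-α)(Z + Σ_i θ_i f_i(x))]^{1/(α-1)}` on `Supp(L)`. -/
theorem Bdiv_forward_projection_form_alpha_lt_one
    {X : Type*} [Fintype X] [Nonempty X] {k : ℕ}
    (α : ℝ) (hα : 0 < α) (hα1 : α < 1)
    (Q : X → ℝ) (hQ : ∀ x, 0 < Q x) (hQsum : ∑ x, Q x = 1)
    (f : Fin k → X → ℝ) (a : Fin k → ℝ)
    (L : Set (X → ℝ))
    (hL : L = {P | (∀ x, 0 ≤ P x) ∧ ∑ x, P x = 1 ∧ ∀ i, ∑ x, P x * f i x = a i})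
    (hLne : L.Nonempty)
    (Pstar : X → ℝ) (hPstar : Pstar ∈ L)
    (hmin : ∀ P ∈ L, BdivR α Pstar Q ≤ BdivR α P Q) :
    ∃ θ : Fin k → ℝ, ∃ Z : ℝ, ∀ x, (∃ P ∈ L, P x ≠ 0) →
      Pstar x = (Q x ^ (α - 1) + (1 - α) * (Z + ∑ i, θ i * f i x)) ^ ((α - 1)⁻¹) := by
  classical
  have h1α : (0:ℝ) < 1 - α := by linarith
  obtain ⟨hP0, hP1, hPc⟩ :
      (∀ x, 0 ≤ Pstar x) ∧ ∑ x, Pstar x = 1 ∧ ∀ i, ∑ x, Pstar x * f i x = a i := by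
    rw [hL] at hPstar; exact hPstar
  -- Step A: positivity on the support
  have hpos : ∀ x, (∃ P ∈ L, P x ≠ 0) → 0 < Pstar x := by
    rintro x₀ ⟨P, hPL, hPx0ne⟩
    obtain ⟨hR0, hR1, hRc⟩ :
        (∀ x, 0 ≤ P x) ∧ ∑ x, P x = 1 ∧ ∀ i, ∑ x, P x * f i x = a i := by
      rw [hL] at hPL; exact hPL
    have hPx0 : 0 < P x₀ := lt_of_le_of_ne (hR0 x₀) (Ne.symm hPx0ne)
    by_contra hcon
    have hstar0 : Pstar x₀ = 0 := le_antisymm (not_lt.1 hcon) (hP0 x₀)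
    set A' : ℝ := ∑ x, (P x - Pstar x) * Q x ^ (α - 1) with hA'
    set A : ℝ := (α / (1 - α)) * A' with hA
    set C : ℝ := ∑ x, Pstar x ^ α with hC
    set PB : ℝ := P x₀ ^ α with hPB
    have hPBpos : 0 < PB := Real.rpow_pos_of_pos hPx0 α
    set E : ℝ := PB / (1 - α) with hE
    have hEpos : 0 < E := div_pos hPBpos h1α
    set D : ℝ := max (A + C / (1 - α)) 1 with hD
    have hDpos : (0:ℝ) < D := lt_of_lt_of_le one_pos (le_max_right _ _)
    set t : ℝ := min (1/2 : ℝ) ((E / (2 * D)) ^ (1 - α)⁻¹) with ht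
    have ht0 : 0 < t :=
      lt_min (by norm_num) (Real.rpow_pos_of_pos (div_pos hEpos (by linarith)) _)
    have ht1 : t ≤ 1 := le_trans (min_le_left _ _) (by norm_num)
    set Pt : X → ℝ := fun x => Pstar x + t * (P x - Pstar x) with hPt
    have hPtL : Pt ∈ L := by
      rw [hL]
      refine ⟨fun x => ?_, ?_, fun i => ?_⟩
      · have hPtx : Pt x = (1 - t) * Pstar x + t * P x := by simp only [hPt]; ring
        rw [hPtx]
        have h1 := hP0 x; have h2 := hR0 x
        nlinarith [ht0.le, sub_nonneg.2 ht1]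
      · have h8 : ∑ x, Pt x = ∑ x, Pstar x + t * ∑ x, (P x - Pstar x) := by
          rw [Finset.mul_sum, ← Finset.sum_add_distrib]
        rw [h8, hP1, Finset.sum_sub_distrib, hR1, hP1]; ring
      · have h8 : ∑ x, Pt x * f i x = ∑ x, Pstar x * f i x
            + t * ∑ x, (P x - Pstar x) * f i x := by
          rw [Finset.mul_sum, ← Finset.sum_add_distrib]
          exact Finset.sum_congr rfl fun x _ => by simp only [hPt]; ring
        have h9 : ∑ x, (P x - Pstar x) * f i x = 0 := by
          calc ∑ x, (P x - Pstar x) * f i x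
              = ∑ x, (P x * f i x - Pstar x * f i x) :=
                Finset.sum_congr rfl fun x _ => by ring
            _ = 0 := by rw [Finset.sum_sub_distrib, hRc i, hPc i, sub_self]
        rw [h8, hPc i, h9, mul_zero, add_zero]
    -- concavity bounds
    have hconc : ∀ x, (1 - t) * Pstar x ^ α + t * P x ^ α ≤ Pt x ^ α := by
      intro x
      have h := (Real.concaveOn_rpow hα.le hα1.le).2 (Set.mem_Ici.2 (hP0 x))
        (Set.mem_Ici.2 (hR0 x)) (by linarith : (0:ℝ) ≤ 1 - t) ht0.le (by ring)
      have hPtx : Pt x = (1 - t) * Pstar x + t * P x := by simp only [hPt]; ring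
      rw [hPtx]
      simpa [smul_eq_mul] using h
    have hterm : ∀ x, Pstar x ^ α - t * Pstar x ^ α ≤ Pt x ^ α := by
      intro x
      have h := hconc x
      have h2 : (0:ℝ) ≤ P x ^ α := Real.rpow_nonneg (hR0 x) α
      nlinarith [ht0.le]
    have hsum : C - t * C + t ^ α * PB ≤ ∑ x, Pt x ^ α := by
      rw [← Finset.add_sum_erase univ (fun x => Pt x ^ α) (Finset.mem_univ x₀)]
      have e1 : Pt x₀ ^ α = t ^ α * PB := by
        have : Pt x₀ = t * P x₀ := by simp only [hPt, hstar0]; ring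
        rw [this, Real.mul_rpow ht0.le (hR0 x₀), hPB]
      have e2 : ∑ x ∈ univ.erase x₀, (Pstar x ^ α - t * Pstar x ^ α)
          ≤ ∑ x ∈ univ.erase x₀, Pt x ^ α :=
        Finset.sum_le_sum fun x _ => hterm x
      have e3 : ∑ x ∈ univ.erase x₀, (Pstar x ^ α - t * Pstar x ^ α) = C - t * C := by
        have e4 : ∑ x ∈ univ.erase x₀, Pstar x ^ α = C := by
          rw [hC, ← Finset.add_sum_erase univ (fun x => Pstar x ^ α) (Finset.mem_univ x₀),
            hstar0, Real.zero_rpow hα.ne', zero_add]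
        rw [Finset.sum_sub_distrib, ← Finset.mul_sum, e4]
      linarith
    have hlin : ∑ x, Pt x * Q x ^ (α - 1) = ∑ x, Pstar x * Q x ^ (α - 1) + t * A' := by
      rw [hA', Finset.mul_sum, ← Finset.sum_add_distrib]
      exact Finset.sum_congr rfl fun x _ => by simp only [hPt]; ring
    have hBdiff : BdivR α Pt Q ≤ BdivR α Pstar Q + t * A + (1/(1-α)) * (t * C)
        - (1/(1-α)) * (t ^ α * PB) := by
      have hB1 : BdivR α Pt Q = (α / (1-α)) * (∑ x, Pstar x * Q x ^ (α-1) + t * A')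
          - (1/(1-α)) * (∑ x, Pt x ^ α) + ∑ x, Q x ^ α := by
        simp only [BdivR]; rw [hlin]
      have hB2 : BdivR α Pstar Q = (α / (1-α)) * (∑ x, Pstar x * Q x ^ (α-1))
          - (1/(1-α)) * C + ∑ x, Q x ^ α := by
        simp only [BdivR, hC]
      have hmul := mul_le_mul_of_nonneg_left hsum
        (le_of_lt (by positivity : (0:ℝ) < 1/(1-α)))
      rw [hB1, hB2, hA]
      have hexp : (1/(1-α)) * (C - t * C + t ^ α * PB)
          = (1/(1-α)) * C - (1/(1-α)) * (t * C) + (1/(1-α)) * (t ^ α * PB) := by ring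
      rw [hexp] at hmul
      linarith
    -- the key numeric inequality
    have hq1 : t * (A + C / (1 - α)) ≤ t * D := by
      have := le_max_left (A + C / (1 - α)) 1
      nlinarith [ht0.le]
    have hq2 : t * D = t ^ α * (t ^ (1 - α) * D) := by
      have : t ^ α * t ^ (1 - α) = t := by
        rw [← Real.rpow_add ht0]; norm_num
      rw [← mul_assoc, this]
    have hq3 : t ^ (1 - α) * D ≤ E / 2 := by
      have h5 : t ^ (1 - α) ≤ E / (2 * D) := by
        have h6 : t ≤ (E / (2 * D)) ^ (1 - α)⁻¹ := min_le_right _ _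
        have h7 := Real.rpow_le_rpow ht0.le h6 (le_of_lt h1α)
        rwa [Real.rpow_inv_rpow (by positivity) h1α.ne'] at h7
      have := mul_le_mul_of_nonneg_right h5 hDpos.le
      calc t ^ (1 - α) * D ≤ E / (2 * D) * D := this
        _ = E / 2 := by field_simp
    have hq4 : t ^ α * (t ^ (1 - α) * D) ≤ t ^ α * (E / 2) :=
      mul_le_mul_of_nonneg_left hq3 (Real.rpow_nonneg ht0.le α)
    have hq5 : 0 < t ^ α * E := mul_pos (Real.rpow_pos_of_pos ht0 α) hEpos
    have hEeq : (1/(1-α)) * (t ^ α * PB) = t ^ α * E := by rw [hE]; field_simp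
    have hfin : BdivR α Pt Q < BdivR α Pstar Q := by
      have hCdiv : (1/(1-α)) * (t * C) = t * (C / (1 - α)) := by ring
      linarith [hq1, hq2, hq4, hq5, hBdiff, hEeq]
    have := hmin Pt hPtL
    linarith
  -- Step B: stationarity
  have hstat : ∀ v : X → ℝ, (∀ x, ¬ (∃ P ∈ L, P x ≠ 0) → v x = 0) →
      (∑ x, v x = 0) → (∀ i, ∑ x, v x * f i x = 0) →
      ∑ x, (Q x ^ (α - 1) - Pstar x ^ (α - 1)) * v x = 0 := by
    intro v hvS hv0 hvf
    set φ : ℝ → ℝ := fun ε => BdivR α (fun x => Pstar x + ε * v x) Q with hφ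
    have hb : ∀ x, HasDerivAt (fun ε : ℝ => Pstar x + ε * v x) (v x) 0 := by
      intro x
      simpa using ((hasDerivAt_id (0:ℝ)).mul_const (v x)).const_add (Pstar x)
    have hvpos : ∀ x, v x ≠ 0 → 0 < Pstar x := by
      intro x hvx
      exact hpos x (by by_contra h; exact hvx (hvS x h))
    have hd : HasDerivAt φ
        ((α / (1 - α)) * ∑ x, v x * Q x ^ (α - 1)
          - (1 / (1 - α)) * ∑ x, v x * α * Pstar x ^ (α - 1)) 0 := by
      have h1 : HasDerivAt (fun ε : ℝ => ∑ x, (Pstar x + ε * v x) * Q x ^ (α - 1))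
          (∑ x, v x * Q x ^ (α - 1)) 0 :=
        HasDerivAt.fun_sum fun x _ => (hb x).mul_const _
      have h2 : HasDerivAt (fun ε : ℝ => ∑ x, (Pstar x + ε * v x) ^ α)
          (∑ x, v x * α * Pstar x ^ (α - 1)) 0 := by
        apply HasDerivAt.fun_sum
        intro x _
        by_cases hvx : v x = 0
        · have heq : (fun ε : ℝ => (Pstar x + ε * v x) ^ α) = fun _ => Pstar x ^ α := by
            funext ε; rw [hvx, mul_zero, add_zero]
          rw [heq, hvx, zero_mul, zero_mul]
          exact hasDerivAt_const (0:ℝ) (Pstar x ^ α)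
        · have := (hb x).rpow_const (p := α) (Or.inl (by simpa using (hvpos x hvx).ne'))
          simpa using this
      exact ((h1.const_mul _).sub (h2.const_mul _)).add_const _
    have hmem : ∀ᶠ ε : ℝ in nhds 0, (fun x => Pstar x + ε * v x) ∈ L := by
      have hnn : ∀ᶠ ε : ℝ in nhds 0, ∀ x, 0 ≤ Pstar x + ε * v x := by
        rw [Filter.eventually_all]
        intro x
        by_cases hvx : v x = 0
        · exact Filter.Eventually.of_forall fun ε => by simp [hvx, hP0 x]
        · have ht : Filter.Tendsto (fun ε : ℝ => Pstar x + ε * v x) (nhds 0)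
              (nhds (Pstar x)) := by
            have : Filter.Tendsto (fun ε : ℝ => Pstar x + ε * v x) (nhds 0)
                (nhds (Pstar x + 0 * v x)) :=
              tendsto_const_nhds.add ((continuous_id.mul continuous_const).tendsto 0)
            simpa using this
          exact (ht.eventually (eventually_gt_nhds (hvpos x hvx))).mono fun ε h => h.le
      refine hnn.mono fun ε hε => ?_
      rw [hL]
      refine ⟨hε, ?_, fun i => ?_⟩
      · simp [Finset.sum_add_distrib, ← Finset.mul_sum, hP1, hv0]
      · have : ∑ x, (Pstar x + ε * v x) * f i x
            = ∑ x, Pstar x * f i x + ε * ∑ x, v x * f i x := by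
          rw [Finset.mul_sum, ← Finset.sum_add_distrib]
          exact Finset.sum_congr rfl fun _ _ => by ring
        rw [this, hPc i, hvf i, mul_zero, add_zero]
    have hφ0 : φ 0 = BdivR α Pstar Q := by
      have : (fun x => Pstar x + 0 * v x) = Pstar := by funext x; ring
      show BdivR α (fun x => Pstar x + 0 * v x) Q = BdivR α Pstar Q
      rw [this]
    have hlm : IsLocalMin φ 0 := by
      refine hmem.mono fun ε hε => ?_
      rw [hφ0]
      exact hmin _ hε
    have hder0 := hlm.hasDerivAt_eq_zero hd
    have hsplit : ∑ x, (Q x ^ (α - 1) - Pstar x ^ (α - 1)) * v x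
        = ∑ x, v x * Q x ^ (α - 1) - ∑ x, v x * Pstar x ^ (α - 1) := by
      rw [← Finset.sum_sub_distrib]; exact Finset.sum_congr rfl fun _ _ => by ring
    have h2' : ∑ x, v x * α * Pstar x ^ (α - 1) = α * ∑ x, v x * Pstar x ^ (α - 1) := by
      rw [Finset.mul_sum]; exact Finset.sum_congr rfl fun _ _ => by ring
    rw [h2'] at hder0
    rw [hsplit]
    have hαne : α ≠ 0 := hα.ne'
    have h1αne : (1:ℝ) - α ≠ 0 := h1α.ne'
    have : α * ∑ x, v x * Q x ^ (α - 1) = α * ∑ x, v x * Pstar x ^ (α - 1) := by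
      field_simp at hder0
      linarith
    have := mul_left_cancel₀ hαne this
    linarith
  -- Step C: linear algebra
  set c : X → ℝ := fun x => Q x ^ (α - 1) - Pstar x ^ (α - 1) with hc
  set T : Finset X := Finset.univ.filter (fun x => ∃ P ∈ L, P x ≠ 0) with hT
  obtain ⟨w, hw⟩ : ∃ w : Option (Fin k) → ℝ, ∀ x ∈ T,
      c x = w none + ∑ i, w (some i) * f i x := by
    set Lfam : Option (Fin k) → ((↥T → ℝ) →ₗ[ℝ] ℝ) :=
      fun o => o.elim (sumLin fun _ => 1) (fun i => sumLin fun y => f i y.1) with hLfam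
    have hker : ⨅ j, LinearMap.ker (Lfam j) ≤ LinearMap.ker (sumLin fun y : ↥T => c y.1) := by
      intro v hv
      simp only [Submodule.mem_iInf, LinearMap.mem_ker] at hv
      set V : X → ℝ := fun x => if h : x ∈ T then v ⟨x, h⟩ else 0 with hV
      have key : ∀ g : X → ℝ, ∑ x, V x * g x = ∑ y : ↥T, g y.1 * v y := by
        intro g
        rw [← Finset.sum_subset (Finset.subset_univ T) (by
          intro x _ hxT; simp [hV, hxT])]
        rw [← Finset.sum_coe_sort T (fun x => V x * g x)]
        exact Finset.sum_congr rfl fun y _ => by simp [hV, y.2, mul_comm]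
      have h0 : ∑ x, V x = 0 := by
        have := hv none
        simp only [hLfam, Option.elim, sumLin_apply, one_mul] at this
        have := key (fun _ => 1)
        simp only [mul_one, one_mul] at this ⊢
        rw [this]
        simpa [hLfam, sumLin_apply] using hv none
      have hfi : ∀ i, ∑ x, V x * f i x = 0 := by
        intro i
        rw [key (f i)]
        simpa [hLfam, sumLin_apply] using hv (some i)
      have hVs : ∀ x, ¬ (∃ P ∈ L, P x ≠ 0) → V x = 0 := by
        intro x hxS
        have : x ∉ T := by simp [hT, hxS]
        simp [hV, this]
      have := hstat V hVs h0 hfi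
      rw [LinearMap.mem_ker, sumLin_apply, ← key c]
      rw [← this]
      exact Finset.sum_congr rfl fun y _ => by ring
    have hspan := mem_span_of_iInf_ker_le_ker (𝕜 := ℝ) hker
    obtain ⟨w, hwsum⟩ := (Submodule.mem_span_range_iff_exists_fun ℝ).1 hspan
    refine ⟨w, fun x hxT => ?_⟩
    have hev := congrArg (fun φ : (↥T → ℝ) →ₗ[ℝ] ℝ => φ (Pi.single (⟨x, hxT⟩ : ↥T) 1)) hwsum
    simp only [LinearMap.add_apply, LinearMap.coe_sum, Finset.sum_apply, LinearMap.smul_apply, smul_eq_mul,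
      Fintype.sum_option, hLfam, Option.elim, sumLin_single, mul_one] at hev
    exact hev.symm
  refine ⟨fun i => -w (some i) / (1 - α), -w none / (1 - α), fun x hx => ?_⟩
  have hxT : x ∈ T := by simp [hT, hx]
  have hcx := hw x hxT
  have hkey : Q x ^ (α - 1) + (1 - α) * (-w none / (1 - α)
      + ∑ i, (-w (some i) / (1 - α)) * f i x) = Pstar x ^ (α - 1) := by
    have : (1 - α) * (-w none / (1 - α) + ∑ i, (-w (some i) / (1 - α)) * f i x)
        = -(w none + ∑ i, w (some i) * f i x) := by
      rw [mul_add, Finset.mul_sum]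
      rw [neg_add]
      congr 1
      · field_simp
      · rw [← Finset.sum_neg_distrib]
        exact Finset.sum_congr rfl fun i _ => by field_simp
    rw [this, ← hcx]
    simp [hc]
  rw [hkey, Real.rpow_rpow_inv (hP0 x) (by linarith)]
end

section
/- Let α > 1 and let P* be the forward B_α-projection of a full-support Q on the linear family L = {P : Σ_x P(x)f_i(x) = a_i}. Then there exist scalars θ_1,…,θ_k and a constant Z such that P*(x) = max{Q(x)^{α-1} + (1-α)(Z + Σ_i θ_i f_i(x)), 0}^{1/(α-1)} for all x ∈ X. -/
open Real Finset

open RealInnerProductSpace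

/-- Farkas' lemma in a real inner product space, by induction on the number of generators. -/
lemma farkas_aux {E : Type*} [NormedAddCommGroup E] [InnerProductSpace ℝ E] :
    ∀ (n : ℕ) (a : Fin n → E) (c : E),
      (∀ v : E, (∀ i, 0 ≤ ⟪a i, v⟫) → 0 ≤ ⟪c, v⟫) →
      ∃ μ : Fin n → ℝ, (∀ i, 0 ≤ μ i) ∧ c = ∑ i, μ i • a i := by
  intro n
  induction n with
  | zero =>
    intro a c h
    refine ⟨0, fun i => le_rfl, ?_⟩
    have h1 := h (-c) (fun i => i.elim0)
    rw [inner_neg_right] at h1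
    have h2 : ⟪c, c⟫ ≤ 0 := by linarith
    have h3 : c = 0 := real_inner_self_nonpos.mp h2
    simp [h3]
  | succ n ih =>
    intro a c h
    by_cases hcase : ∀ v : E, (∀ i : Fin n, 0 ≤ ⟪a i.succ, v⟫) → 0 ≤ ⟪c, v⟫
    · obtain ⟨μ, hμ, hc⟩ := ih (fun i => a i.succ) c hcase
      refine ⟨fun i => Fin.cases 0 μ i, fun i => Fin.cases le_rfl hμ i, ?_⟩
      rw [Fin.sum_univ_succ]
      simpa using hc
    · push_neg at hcase
      obtain ⟨w, hw, hcw⟩ := hcase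
      have h0w : ⟪a 0, w⟫ < 0 := by
        by_contra hh
        push_neg at hh
        exact absurd (h w (fun i => Fin.cases hh hw i)) (not_le.2 hcw)
      have h0w' : ⟪a 0, w⟫ ≠ 0 := ne_of_lt h0w
      set pr : E → E := fun x => x - (⟪x, w⟫ / ⟪a 0, w⟫) • a 0 with hpr
      -- symmetric pairing identity
      have key : ∀ x v : E, ⟪pr x, v⟫ = ⟪x, v - (⟪a 0, v⟫ / ⟪a 0, w⟫) • w⟫ := by
        intro x v
        rw [hpr]
        simp only [inner_sub_left, inner_sub_right, real_inner_smul_left, real_inner_smul_right]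
        field_simp
      have claim : ∀ v : E, (∀ i : Fin n, 0 ≤ ⟪pr (a i.succ), v⟫) → 0 ≤ ⟪pr c, v⟫ := by
        intro v hv
        set v' : E := v - (⟪a 0, v⟫ / ⟪a 0, w⟫) • w with hv'
        have h0 : ⟪a 0, v'⟫ = 0 := by
          rw [hv']
          rw [inner_sub_right, real_inner_smul_right, div_mul_cancel₀ _ h0w']
          ring
        have hall : ∀ i : Fin (n + 1), 0 ≤ ⟪a i, v'⟫ := by
          intro i
          refine Fin.cases (h0.ge) (fun j => ?_) i
          rw [← key]
          exact hv j
        rw [key]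
        exact h v' hall
      obtain ⟨μ, hμ, hc'⟩ := ih (fun i => pr (a i.succ)) (pr c) claim
      set μ0 : ℝ := (⟪c, w⟫ - ∑ i, μ i * ⟪a i.succ, w⟫) / ⟪a 0, w⟫ with hμ0
      refine ⟨fun i => Fin.cases μ0 μ i, fun i => ?_, ?_⟩
      · refine Fin.cases ?_ hμ i
        show 0 ≤ μ0
        rw [hμ0]
        have hnum : 0 ≤ ∑ i, μ i * ⟪a i.succ, w⟫ :=
          Finset.sum_nonneg fun i _ => mul_nonneg (hμ i) (hw i)
        exact div_nonneg_iff.mpr (Or.inr ⟨by linarith, h0w.le⟩)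
      · rw [Fin.sum_univ_succ]
        have expand : ∑ i : Fin n, (fun i => Fin.cases (motive := fun _ => ℝ) μ0 μ i) i.succ • a i.succ
            = ∑ i : Fin n, μ i • a i.succ := by simp
        rw [expand]
        have hc'' : c - (⟪c, w⟫ / ⟪a 0, w⟫) • a 0
            = ∑ i : Fin n, μ i • (a i.succ - (⟪a i.succ, w⟫ / ⟪a 0, w⟫) • a 0) := hc'
        have hsum : ∑ i : Fin n, μ i • (a i.succ - (⟪a i.succ, w⟫ / ⟪a 0, w⟫) • a 0)
            = ∑ i : Fin n, μ i • a i.succ - (∑ i : Fin n, μ i * (⟪a i.succ, w⟫ / ⟪a 0, w⟫)) • a 0 := by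
          simp only [smul_sub, smul_smul]
          rw [Finset.sum_sub_distrib, Finset.sum_smul]
        have hC : c - (⟪c, w⟫ / ⟪a 0, w⟫) • a 0
            = ∑ i : Fin n, μ i • a i.succ - (∑ i : Fin n, μ i * (⟪a i.succ, w⟫ / ⟪a 0, w⟫)) • a 0 :=
          hc''.trans hsum
        have hμ0' : μ0 = ⟪c, w⟫ / ⟪a 0, w⟫ - ∑ i : Fin n, μ i * (⟪a i.succ, w⟫ / ⟪a 0, w⟫) := by
          rw [hμ0, sub_div, Finset.sum_div]
          congr 1
          apply Finset.sum_congr rfl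
          intro i _
          rw [mul_div_assoc]
        show c = μ0 • a 0 + ∑ i : Fin n, μ i • a i.succ
        rw [hμ0']
        linear_combination (norm := module) hC

/-- Farkas' lemma with an arbitrary finite index type. -/
lemma farkas_fintype {E : Type*} [NormedAddCommGroup E] [InnerProductSpace ℝ E]
    {ι : Type*} [Fintype ι] (a : ι → E) (c : E)
    (h : ∀ v : E, (∀ i, 0 ≤ ⟪a i, v⟫) → 0 ≤ ⟪c, v⟫) :
    ∃ μ : ι → ℝ, (∀ i, 0 ≤ μ i) ∧ c = ∑ i, μ i • a i := by
  set e := Fintype.equivFin ι with he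
  obtain ⟨μ, hμ, hc⟩ := farkas_aux (Fintype.card ι) (fun j => a (e.symm j)) c
    (fun v hv => h v (fun i => by simpa using hv (e i)))
  refine ⟨fun i => μ (e i), fun i => hμ _, ?_⟩
  rw [hc]
  exact Fintype.sum_equiv e.symm _ _ (fun j => by simp)

/-- Farkas' lemma for `X → ℝ` with explicit dot products. -/
lemma farkas_pi {X : Type*} [Fintype X] {ι : Type*} [Fintype ι] (A : ι → X → ℝ) (c : X → ℝ)
    (h : ∀ v : X → ℝ, (∀ i, 0 ≤ ∑ x, A i x * v x) → 0 ≤ ∑ x, c x * v x) :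
    ∃ μ : ι → ℝ, (∀ i, 0 ≤ μ i) ∧ ∀ x, c x = ∑ i, μ i * A i x := by
  classical
  set E := EuclideanSpace ℝ X with hE
  set e : (X → ℝ) ≃ E := (WithLp.equiv 2 (X → ℝ)).symm with he
  have hip : ∀ u v : X → ℝ, ⟪e u, e v⟫ = ∑ x, u x * v x := by
    intro u v
    simp only [e, WithLp.equiv, Equiv.symm, Equiv.refl]
    rw [PiLp.inner_apply]
    simp [RCLike.inner_apply]
    exact Finset.sum_congr rfl (fun x _ => mul_comm _ _)
  obtain ⟨μ, hμ, hc⟩ := farkas_fintype (fun i => e (A i)) (e c)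
    (fun v hv => by
      rw [show v = e (e.symm v) from (e.apply_symm_apply v).symm] at hv ⊢
      rw [hip]
      exact h _ (fun i => by rw [← hip]; exact hv i))
  refine ⟨μ, hμ, fun x => ?_⟩
  have hδ : ∀ g : X → ℝ, ⟪e (fun y => if y = x then 1 else 0), e g⟫ = g x := by
    intro g
    rw [hip]
    simp [ite_mul]
  have h1 := hδ c
  rw [hc] at h1
  rw [← h1, inner_sum]
  apply Finset.sum_congr rfl
  intro i _
  rw [real_inner_smul_right, hδ]

/-- For `α > 1`, the forward `B_α`-projection `P*` of a full-support `Q`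
on a linear family `L` has the truncated power-law form
`P*(x) = [Q(x)^{α-1} + (1-α)(Z + Σ_i θ_i f_i(x))]_+^{1/(α-1)}` for all `x ∈ X`. -/
theorem Bdiv_forward_projection_form_alpha_gt_one
    {X : Type*} [Fintype X] [Nonempty X] {k : ℕ}
    (α : ℝ) (hα : 1 < α)
    (Q : X → ℝ) (hQ : ∀ x, 0 < Q x) (hQsum : ∑ x, Q x = 1)
    (f : Fin k → X → ℝ) (a : Fin k → ℝ)
    (L : Set (X → ℝ))
    (hL : L = {P | (∀ x, 0 ≤ P x) ∧ ∑ x, P x = 1 ∧ ∀ i, ∑ x, P x * f i x = a i})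
    (hLne : L.Nonempty)
    (Pstar : X → ℝ) (hPstar : Pstar ∈ L)
    (hmin : ∀ P ∈ L, BdivR α Pstar Q ≤ BdivR α P Q) :
    ∃ θ : Fin k → ℝ, ∃ Z : ℝ, ∀ x,
      Pstar x =
        (max (Q x ^ (α - 1) + (1 - α) * (Z + ∑ i, θ i * f i x)) 0) ^ ((α - 1)⁻¹) := by
  classical
  subst hL
  obtain ⟨hPnn, hPsum, hPcon⟩ := hPstar
  have ha1 : (0:ℝ) < α - 1 := by linarith
  have h1α : (1:ℝ) - α ≠ 0 := by linarith
  set c : X → ℝ := fun x => Pstar x ^ (α - 1) - Q x ^ (α - 1) with hc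
  -- Step 1: first-order optimality along feasible directions
  have key : ∀ v : X → ℝ, (∑ x, v x = 0) → (∀ i, ∑ x, v x * f i x = 0) →
      (∀ x, Pstar x = 0 → 0 ≤ v x) → 0 ≤ ∑ x, c x * v x := by
    intro v hv0 hvf hvz
    have hnn : ∀ᶠ t in nhdsWithin (0:ℝ) (Set.Ioi 0), ∀ x, 0 ≤ Pstar x + t * v x := by
      rw [Filter.eventually_all]
      intro x
      rcases eq_or_lt_of_le (hPnn x) with hz | hp
      · filter_upwards [self_mem_nhdsWithin] with t ht
        have h1 := hvz x hz.symm
        have h2 : (0:ℝ) < t := ht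
        nlinarith
      · have hcont : Filter.Tendsto (fun t : ℝ => Pstar x + t * v x) (nhds 0)
            (nhds (Pstar x)) := by
          have : Filter.Tendsto (fun t : ℝ => Pstar x + t * v x) (nhds 0)
              (nhds (Pstar x + 0 * v x)) :=
            (continuous_const.add (continuous_id.mul continuous_const)).tendsto 0
          simpa using this
        have := hcont.eventually (lt_mem_nhds hp)
        filter_upwards [this.filter_mono nhdsWithin_le_nhds] with t ht using ht.le
    have hmem : ∀ᶠ t in nhdsWithin (0:ℝ) (Set.Ioi 0),
        (fun x => Pstar x + t * v x) ∈
          {P : X → ℝ | (∀ x, 0 ≤ P x) ∧ ∑ x, P x = 1 ∧ ∀ i, ∑ x, P x * f i x = a i} := by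
      filter_upwards [hnn] with t hnt
      refine ⟨hnt, ?_, ?_⟩
      · rw [Finset.sum_add_distrib, ← Finset.mul_sum, hPsum, hv0]; ring
      · intro i
        have h1 : ∑ x, (Pstar x + t * v x) * f i x
            = ∑ x, Pstar x * f i x + t * ∑ x, v x * f i x := by
          rw [Finset.mul_sum, ← Finset.sum_add_distrib]
          apply Finset.sum_congr rfl
          intro x _; ring
        rw [h1, hPcon i, hvf i]; ring
    set D : ℝ := α / (1 - α) * ∑ x, v x * Q x ^ (α - 1)
        - 1 / (1 - α) * ∑ x, α * Pstar x ^ (α - 1) * v x with hD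
    have hl : ∀ x, HasDerivAt (fun t : ℝ => Pstar x + t * v x) (v x) 0 := by
      intro x
      simpa using ((hasDerivAt_id (0:ℝ)).mul_const (v x)).const_add (Pstar x)
    have hderiv : HasDerivAt (fun t : ℝ => BdivR α (fun x => Pstar x + t * v x) Q) D 0 := by
      have h1 : HasDerivAt (fun t : ℝ => ∑ x, (Pstar x + t * v x) * Q x ^ (α - 1))
          (∑ x, v x * Q x ^ (α - 1)) 0 :=
        HasDerivAt.fun_sum (fun x _ => (hl x).mul_const _)
      have h2 : HasDerivAt (fun t : ℝ => ∑ x, (Pstar x + t * v x) ^ α)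
          (∑ x, α * Pstar x ^ (α - 1) * v x) 0 := by
        apply HasDerivAt.fun_sum
        intro x _
        have hr := Real.hasDerivAt_rpow_const (x := Pstar x + 0 * v x) (p := α) (Or.inr hα.le)
        have h3 := hr.comp 0 (hl x)
        simpa [Function.comp_def, mul_assoc] using h3
      unfold BdivR
      simpa [hD] using
        ((h1.const_mul (α / (1 - α))).sub (h2.const_mul (1 / (1 - α)))).add_const (∑ x, Q x ^ α)
    have hD0 : 0 ≤ D := by
      have hs := hasDerivAt_iff_tendsto_slope.mp hderiv
      have hsub : Set.Ioi (0:ℝ) ⊆ {(0:ℝ)}ᶜ := by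
        intro t ht; exact ne_of_gt ht
      have hs' := hs.mono_left (nhdsWithin_mono 0 hsub)
      refine ge_of_tendsto hs' ?_
      filter_upwards [hmem, self_mem_nhdsWithin] with t hBt ht
      have ht0 : (0:ℝ) < t := ht
      have hB := hmin _ hBt
      rw [slope_def_field]
      have hφ0 : (fun x => Pstar x + (0:ℝ) * v x) = Pstar := by funext x; ring
      simp only [hφ0]
      apply div_nonneg _ (by linarith)
      simpa using sub_nonneg.mpr hB
    have e3 : ∑ x, α * Pstar x ^ (α - 1) * v x = α * ∑ x, Pstar x ^ (α - 1) * v x := by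
      rw [Finset.mul_sum]
      apply Finset.sum_congr rfl
      intro x _; ring
    have e2 : ∑ x, v x * Q x ^ (α - 1) = ∑ x, Q x ^ (α - 1) * v x :=
      Finset.sum_congr rfl (fun x _ => mul_comm _ _)
    have e1 : ∑ x, c x * v x = ∑ x, Pstar x ^ (α - 1) * v x - ∑ x, Q x ^ (α - 1) * v x := by
      rw [← Finset.sum_sub_distrib]
      apply Finset.sum_congr rfl
      intro x _
      show (Pstar x ^ (α - 1) - Q x ^ (α - 1)) * v x = _
      ring
    have hα0 : (α:ℝ) ≠ 0 := by linarith
    have hfin : ∑ x, c x * v x = ((α - 1) / α) * D := by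
      rw [e1, hD, e3, e2]
      field_simp
      ring
    rw [hfin]
    exact mul_nonneg (div_nonneg ha1.le (by linarith)) hD0
  -- Step 2: Farkas
  set g : Option (Fin k) → X → ℝ := fun j => Option.elim j (fun _ => 1) f with hg
  set A : (Option (Fin k) ⊕ Option (Fin k)) ⊕ X → X → ℝ := fun i =>
    Sum.elim (Sum.elim g (fun j => -g j))
      (fun x₀ => fun x => if Pstar x₀ = 0 ∧ x = x₀ then 1 else 0) i with hA
  obtain ⟨μ, hμ, hcrep⟩ := farkas_pi A c (by
    intro v hv
    -- equality constraints
    have hgv : ∀ j, ∑ x, g j x * v x = 0 := by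
      intro j
      have h1 := hv (Sum.inl (Sum.inl j))
      have h2 := hv (Sum.inl (Sum.inr j))
      simp only [hA, Sum.elim_inl, Sum.elim_inr] at h1 h2
      have h3 : ∑ x, (-g j) x * v x = -∑ x, g j x * v x := by
        rw [← Finset.sum_neg_distrib]
        apply Finset.sum_congr rfl
        intro x _
        show -g j x * v x = _
        ring
      rw [h3] at h2
      linarith
    have hv0 : ∑ x, v x = 0 := by
      have := hgv none
      simpa [hg] using this
    have hvf : ∀ i, ∑ x, v x * f i x = 0 := by
      intro i
      have := hgv (some i)
      simp only [hg, Option.elim] at this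
      rw [← this]
      apply Finset.sum_congr rfl
      intro x _; ring
    have hvz : ∀ x, Pstar x = 0 → 0 ≤ v x := by
      intro x hx
      have h1 := hv (Sum.inr x)
      simp only [hA, Sum.elim_inr] at h1
      have h2 : ∑ y, (if Pstar x = 0 ∧ y = x then (1:ℝ) else 0) * v y = v x := by
        simp [hx, ite_mul]
      rwa [h2] at h1
    exact key v hv0 hvf hvz)
  set w : Option (Fin k) → ℝ :=
    fun j => μ (Sum.inl (Sum.inl j)) - μ (Sum.inl (Sum.inr j)) with hw
  set m : X → ℝ := fun x => ∑ x₀, μ (Sum.inr x₀) * A (Sum.inr x₀) x with hm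
  have hcx : ∀ x, c x = w none + (∑ i : Fin k, w (some i) * f i x) + m x := by
    intro x
    rw [hcrep x, Fintype.sum_sum_type, Fintype.sum_sum_type]
    rw [Fintype.sum_option (fun j => μ (Sum.inl (Sum.inl j)) * A (Sum.inl (Sum.inl j)) x)]
    rw [Fintype.sum_option (fun j => μ (Sum.inl (Sum.inr j)) * A (Sum.inl (Sum.inr j)) x)]
    simp only [hA, Sum.elim_inl, Sum.elim_inr, hg, Option.elim, Pi.neg_apply, hw, hm]
    have hs : ∑ i : Fin k, (μ (Sum.inl (Sum.inl (some i))) - μ (Sum.inl (Sum.inr (some i)))) * f i x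
        = ∑ i : Fin k, μ (Sum.inl (Sum.inl (some i))) * f i x
          + ∑ i : Fin k, μ (Sum.inl (Sum.inr (some i))) * -f i x := by
      rw [← Finset.sum_add_distrib]
      apply Finset.sum_congr rfl
      intro i _; ring
    rw [hs]
    ring
  have hm0 : ∀ x, 0 ≤ m x := by
    intro x
    apply Finset.sum_nonneg
    intro x₀ _
    apply mul_nonneg (hμ _)
    simp only [hA, Sum.elim_inr]
    split_ifs <;> norm_num
  have hmz : ∀ x, Pstar x ≠ 0 → m x = 0 := by
    intro x hx
    apply Finset.sum_eq_zero
    intro x₀ _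
    simp only [hA, Sum.elim_inr]
    have : ¬(Pstar x₀ = 0 ∧ x = x₀) := by
      rintro ⟨h1, h2⟩
      exact hx (h2 ▸ h1)
    rw [if_neg this, mul_zero]
  -- conclusion
  refine ⟨fun i => w (some i) / (1 - α), w none / (1 - α), fun x => ?_⟩
  have hZθ : (1 - α) * (w none / (1 - α) + ∑ i : Fin k, w (some i) / (1 - α) * f i x)
      = c x - m x := by
    have h1 : ∑ i : Fin k, w (some i) / (1 - α) * f i x
        = (∑ i : Fin k, w (some i) * f i x) / (1 - α) := by
      rw [Finset.sum_div]
      apply Finset.sum_congr rfl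
      intro i _; ring
    rw [h1, hcx x]
    field_simp
    ring
  rw [hZθ]
  rcases eq_or_lt_of_le (hPnn x) with hz | hp
  · -- Pstar x = 0
    have hcz : c x = -(Q x ^ (α - 1)) := by
      rw [hc]
      show Pstar x ^ (α - 1) - Q x ^ (α - 1) = _
      rw [← hz, Real.zero_rpow (ne_of_gt ha1)]
      ring
    have hin : Q x ^ (α - 1) + (c x - m x) = -m x := by rw [hcz]; ring
    rw [hin, max_eq_right (neg_nonpos.mpr (hm0 x)), Real.zero_rpow (inv_ne_zero (ne_of_gt ha1))]
    exact hz.symm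
  · -- Pstar x > 0
    have hmx : m x = 0 := hmz x (ne_of_gt hp)
    have hin : Q x ^ (α - 1) + (c x - m x) = Pstar x ^ (α - 1) := by
      rw [hmx, hc]
      show Q x ^ (α - 1) + (Pstar x ^ (α - 1) - Q x ^ (α - 1) - 0) = _
      ring
    rw [hin, max_eq_left (Real.rpow_nonneg (hPnn x) _),
      Real.rpow_rpow_inv (hPnn x) (ne_of_gt ha1)]
end

section
/- Let P_θ belong to the α-power-law family, P_θ(x) = Z(θ)^{-1}[Q(x)^{α-1} + (1-α)θᵀf(x)]^{1/(α-1)}. Then the modified likelihood L_3^{(α)}(θ) = (α/(α-1)) log[(1/n) Σ_j P_θ(X_j)^{α-1}] − log Σ_x P_θ(x)^α can be decomposed as L_3^{(α)}(θ) = g(θ, T(X_1,…,X_n)) + h(X_1,…,X_n), where T(X_1,…,X_n) = f̄ / (overline{Q^{α-1}}) with f̄ = (1/n)Σ_j f(X_j) and overline{Q^{α-1}} = (1/n)Σ_j Q(X_j)^{α-1}, h = (α/(α-1)) log overline{Q^{α-1}}, and g(θ,T) = −α log Z(θ) + (α/(α-1)) log[1 + (1-α) θᵀ T] − log Σ_x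 P_θ(x)^α. In particular T is a sufficient statistic for θ with respect to L_3^{(α)}. -/
open Real Finset

/-- Normalizing constant of the α-power-law family generated by `Q` and `f`. -/
noncomputable def Zpow {X : Type*} [Fintype X] {k : ℕ}
    (α : ℝ) (Q : X → ℝ) (f : Fin k → X → ℝ) (t : Fin k → ℝ) : ℝ :=
  ∑ y, (Q y ^ (α - 1) + (1 - α) * ∑ i, t i * f i y) ^ ((α - 1)⁻¹)

/-- Member of the α-power-law family generated by `Q` and `f`. -/
noncomputable def Ppow {X : Type*} [Fintype X] {k : ℕ}
    (α : ℝ) (Q : X → ℝ) (f : Fin k → X → ℝ) (t : Fin k → ℝ) (x : X) : ℝ :=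
  (Zpow α Q f t)⁻¹ * (Q x ^ (α - 1) + (1 - α) * ∑ i, t i * f i x) ^ ((α - 1)⁻¹)

/-- Sufficiency decomposition of the modified likelihood `L_3^{(α)}` on
the α-power-law family: `L_3^{(α)}(θ) = g(θ, T) + h`, where
`T = f̄ / overline{Q^{α-1}}`, `h = (α/(α-1)) log overline{Q^{α-1}}`, and
`g(θ,T) = −α log Z(θ) + (α/(α-1)) log[1 + (1-α)θᵀT] − log Σ_x P_θ(x)^α`. -/
theorem power_law_family_sufficiency_decomposition
    {X : Type*} [Fintype X] [Nonempty X] {k : ℕ} {n : ℕ}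
    (hn : 0 < n) (Xs : Fin n → X)
    (α : ℝ) (hα : 0 < α) (hα1 : α ≠ 1)
    (Q : X → ℝ) (hQ : ∀ x, 0 < Q x) (hQsum : ∑ x, Q x = 1)
    (f : Fin k → X → ℝ) (θ : Fin k → ℝ)
    (hbr : ∀ x, 0 < Q x ^ (α - 1) + (1 - α) * ∑ i, θ i * f i x) :
    (α / (α - 1)) * Real.log ((n : ℝ)⁻¹ * ∑ j, Ppow α Q f θ (Xs j) ^ (α - 1))
        - Real.log (∑ x, Ppow α Q f θ x ^ α)
      = (-α * Real.log (Zpow α Q f θ)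
          + (α / (α - 1)) *
              Real.log (1 + (1 - α) * ∑ i, θ i *
                (((n : ℝ)⁻¹ * ∑ j, f i (Xs j)) / ((n : ℝ)⁻¹ * ∑ j, Q (Xs j) ^ (α - 1))))
          - Real.log (∑ x, Ppow α Q f θ x ^ α))
        + (α / (α - 1)) * Real.log ((n : ℝ)⁻¹ * ∑ j, Q (Xs j) ^ (α - 1)) := by
  have hα1' : α - 1 ≠ 0 := sub_ne_zero.mpr hα1
  have hZ : 0 < Zpow α Q f θ := by
    apply Finset.sum_pos (fun y _ => Real.rpow_pos_of_pos (hbr y) _)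
    exact Finset.univ_nonempty
  have hn' : (0:ℝ) < (n:ℝ)⁻¹ := by positivity
  set B := (n : ℝ)⁻¹ * ∑ j, Q (Xs j) ^ (α - 1) with hBdef
  set S := (n : ℝ)⁻¹ * ∑ j, (Q (Xs j) ^ (α - 1) + (1 - α) * ∑ i, θ i * f i (Xs j))
    with hSdef
  have hB : 0 < B := by
    apply mul_pos hn'
    haveI : Nonempty (Fin n) := Fin.pos_iff_nonempty.mp hn
    exact Finset.sum_pos (fun j _ => Real.rpow_pos_of_pos (hQ _) _) Finset.univ_nonempty
  have hS : 0 < S := by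
    apply mul_pos hn'
    haveI : Nonempty (Fin n) := Fin.pos_iff_nonempty.mp hn
    exact Finset.sum_pos (fun j _ => hbr _) Finset.univ_nonempty
  -- key rewriting of Ppow ^ (α-1)
  have key : ∀ x, Ppow α Q f θ x ^ (α - 1)
      = (Zpow α Q f θ) ^ (-(α-1)) *
        (Q x ^ (α - 1) + (1 - α) * ∑ i, θ i * f i x) := by
    intro x
    unfold Ppow
    rw [Real.mul_rpow (inv_nonneg.mpr hZ.le) (Real.rpow_nonneg (hbr x).le _),
      Real.inv_rpow hZ.le, ← Real.rpow_neg hZ.le,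
      Real.rpow_inv_rpow (hbr x).le hα1']
  have hsum : (n : ℝ)⁻¹ * ∑ j, Ppow α Q f θ (Xs j) ^ (α - 1)
      = (Zpow α Q f θ) ^ (-(α-1)) * S := by
    simp only [key, ← Finset.mul_sum, hSdef]; ring
  have hT : 1 + (1 - α) * ∑ i, θ i *
      (((n : ℝ)⁻¹ * ∑ j, f i (Xs j)) / B) = S / B := by
    rw [eq_div_iff hB.ne']
    have hswap : S = B + (1 - α) * ∑ i, θ i * ((n : ℝ)⁻¹ * ∑ j, f i (Xs j)) := by
      rw [hSdef, hBdef, Finset.sum_add_distrib, mul_add]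
      congr 1
      rw [Finset.mul_sum, Finset.mul_sum]
      simp only [Finset.mul_sum]
      rw [Finset.sum_comm]
      congr 1; ext j; congr 1; ext i; ring
    rw [hswap, add_mul, one_mul]
    congr 1
    rw [mul_assoc, Finset.sum_mul]
    congr 1
    refine Finset.sum_congr rfl fun i _ => ?_
    rw [mul_assoc, div_mul_cancel₀ _ hB.ne']
  rw [hsum, Real.log_mul (by positivity) hS.ne', Real.log_rpow hZ, hT,
    Real.log_div hS.ne' hB.ne']
  field_simp
  ring
end
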